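/- arXiv:2604.11591 — 9 statements merged into one kernel-verified Lean document; each statement's English description precedes it below -/
import Mathlib

section
/- With P, D⁺, Σ_τ, B(τ), X, X̃, Q₀₁(τ) as described, assume Q₀₁(τ) is invertible and define W_τ = (−τ⁻²PD⁺Pᵀ) Σ_τ⁻¹ (Iₙ − X(XᵀΣ_τ⁻¹X)⁻¹XᵀΣ_τ⁻¹). Then the trace of W_τ satisfies tr(W_τ) = −τ⁻² tr(D⁺B(τ)) + τ⁻² tr((Q₀₁(τ))⁻¹Q₁₂(τ)). -/
open Matrix

/-- With the spectral setup and `Q_{ij}(τ) = X̃ᵀ(D⁺)ⁱ(B(τ))ʲX̃`, assuming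
`Q₀₁(τ)` invertible, the matrix
`W_τ = (−τ⁻²PD⁺Pᵀ) Σ_τ⁻¹ (Iₙ − X(XᵀΣ_τ⁻¹X)⁻¹XᵀΣ_τ⁻¹)` satisfies
`tr(W_τ) = −τ⁻² tr(D⁺B(τ)) + τ⁻² tr((Q₀₁(τ))⁻¹Q₁₂(τ))`. -/
theorem trace_W_tau
    (n p : ℕ) (hp : p < n) (τ : ℝ) (hτ : 0 < τ)
    (P : Matrix (Fin n) (Fin n) ℝ) (hP : Pᵀ * P = 1)
    (d : Fin n → ℝ) (hd : ∀ i, 0 ≤ d i)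
    (Dplus : Matrix (Fin n) (Fin n) ℝ) (hD : Dplus = Matrix.diagonal d)
    (S B : Matrix (Fin n) (Fin n) ℝ)
    (hS : S = P * ((1 : Matrix (Fin n) (Fin n) ℝ) + τ⁻¹ • Dplus) * Pᵀ)
    (hB : B = ((1 : Matrix (Fin n) (Fin n) ℝ) + τ⁻¹ • Dplus)⁻¹)
    (X : Matrix (Fin n) (Fin p) ℝ)
    (Xt : Matrix (Fin n) (Fin p) ℝ) (hXt : Xt = Pᵀ * X)
    (Q : ℕ → ℕ → Matrix (Fin p) (Fin p) ℝ)
    (hQ : ∀ i j, Q i j = Xtᵀ * Dplus ^ i * B ^ j * Xt)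
    (hinv : IsUnit (Q 0 1).det)
    (W : Matrix (Fin n) (Fin n) ℝ)
    (hW : W = (-(τ ^ 2)⁻¹ • (P * Dplus * Pᵀ)) * S⁻¹ *
      ((1 : Matrix (Fin n) (Fin n) ℝ) - X * (Xᵀ * S⁻¹ * X)⁻¹ * Xᵀ * S⁻¹)) :
    W.trace = -(τ ^ 2)⁻¹ * (Dplus * B).trace + (τ ^ 2)⁻¹ * ((Q 0 1)⁻¹ * Q 1 2).trace := by
  have hPP : P * Pᵀ = 1 := by
    rw [mul_eq_one_comm] at hP; exact hP
  set e : Fin n → ℝ := fun i => 1 + τ⁻¹ * d i with he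
  have hepos : ∀ i, 0 < e i := fun i => by
    have : 0 ≤ τ⁻¹ * d i := mul_nonneg (le_of_lt (inv_pos.mpr hτ)) (hd i)
    simp [he]; linarith
  have hM : (1 : Matrix (Fin n) (Fin n) ℝ) + τ⁻¹ • Dplus = Matrix.diagonal e := by
    rw [hD]
    ext i j
    rcases eq_or_ne i j with h | h <;>
      simp [Matrix.diagonal_apply, Matrix.one_apply, h, he]
  have hBdiag : B = Matrix.diagonal (fun i => (e i)⁻¹) := by
    rw [hB, hM]
    apply Matrix.inv_eq_right_inv
    rw [Matrix.diagonal_mul_diagonal, ← Matrix.diagonal_one]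
    exact congrArg Matrix.diagonal (funext fun i => mul_inv_cancel₀ (hepos i).ne')
  have hMB : ((1 : Matrix (Fin n) (Fin n) ℝ) + τ⁻¹ • Dplus) * B = 1 := by
    rw [hM, hBdiag, Matrix.diagonal_mul_diagonal, ← Matrix.diagonal_one]
    exact congrArg Matrix.diagonal (funext fun i => mul_inv_cancel₀ (hepos i).ne')
  have hSinv : S⁻¹ = P * B * Pᵀ := by
    apply Matrix.inv_eq_right_inv
    rw [hS]
    calc P * ((1 : Matrix (Fin n) (Fin n) ℝ) + τ⁻¹ • Dplus) * Pᵀ * (P * B * Pᵀ)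
        = P * (((1 : Matrix (Fin n) (Fin n) ℝ) + τ⁻¹ • Dplus) * (Pᵀ * P) * B) * Pᵀ := by
          simp only [Matrix.mul_assoc]
      _ = 1 := by rw [hP, Matrix.mul_one, hMB, Matrix.mul_one, hPP]
  have hXtT : Xtᵀ = Xᵀ * P := by rw [hXt, Matrix.transpose_mul, Matrix.transpose_transpose]
  have hQ01 : Xᵀ * S⁻¹ * X = Q 0 1 := by
    rw [hQ, hSinv, pow_zero, pow_one, Matrix.mul_one, hXtT, hXt]
    simp only [Matrix.mul_assoc]
  -- commutation of Dplus and B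
  have hcomm : B * Dplus = Dplus * B := by
    rw [hBdiag, hD, Matrix.diagonal_mul_diagonal, Matrix.diagonal_mul_diagonal]
    exact congrArg Matrix.diagonal (funext fun i => mul_comm _ _)
  -- first trace term
  have hA1 : (P * Dplus * Pᵀ * S⁻¹).trace = (Dplus * B).trace := by
    have h1 : P * Dplus * Pᵀ * S⁻¹ = P * (Dplus * B) * Pᵀ := by
      rw [hSinv]
      calc P * Dplus * Pᵀ * (P * B * Pᵀ)
          = P * (Dplus * (Pᵀ * P) * B) * Pᵀ := by simp only [Matrix.mul_assoc]
        _ = P * (Dplus * B) * Pᵀ := by rw [hP, Matrix.mul_one]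
    rw [h1, Matrix.mul_assoc, Matrix.trace_mul_comm, Matrix.mul_assoc, hP, Matrix.mul_one]
  -- second trace term
  have hA2 : (P * Dplus * Pᵀ * S⁻¹ * (X * (Q 0 1)⁻¹ * Xᵀ * S⁻¹)).trace
      = ((Q 0 1)⁻¹ * Q 1 2).trace := by
    have h2 : P * Dplus * Pᵀ * S⁻¹ * (X * (Q 0 1)⁻¹ * Xᵀ * S⁻¹)
        = P * (Dplus * B * Xt * (Q 0 1)⁻¹ * Xtᵀ * B) * Pᵀ := by
      rw [hSinv, hXtT, hXt]
      calc P * Dplus * Pᵀ * (P * B * Pᵀ) * (X * (Q 0 1)⁻¹ * Xᵀ * (P * B * Pᵀ))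
          = P * (Dplus * ((Pᵀ * P) * (B * ((Pᵀ * X) * ((Q 0 1)⁻¹ * (Xᵀ * (P * (B * Pᵀ)))))))) := by
            simp only [Matrix.mul_assoc]
        _ = P * (Dplus * B * (Pᵀ * X) * (Q 0 1)⁻¹ * (Xᵀ * P) * B) * Pᵀ := by
            rw [hP, Matrix.one_mul]; simp only [Matrix.mul_assoc]
    rw [h2, Matrix.mul_assoc, Matrix.trace_mul_comm, Matrix.mul_assoc, hP, Matrix.mul_one]
    have h3 : Dplus * B * Xt * (Q 0 1)⁻¹ * Xtᵀ * B
        = (Dplus * B * Xt) * ((Q 0 1)⁻¹ * (Xtᵀ * B)) := by simp only [Matrix.mul_assoc]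
    rw [h3, Matrix.trace_mul_comm]
    congr 1
    rw [hQ 1 2, pow_one, pow_two]
    calc (Q 0 1)⁻¹ * (Xtᵀ * B) * (Dplus * B * Xt)
        = (Q 0 1)⁻¹ * (Xtᵀ * ((B * Dplus) * (B * Xt))) := by simp only [Matrix.mul_assoc]
      _ = (Q 0 1)⁻¹ * (Xtᵀ * Dplus * (B * B) * Xt) := by
          rw [hcomm]; simp only [Matrix.mul_assoc]
  -- put it together
  rw [hW, hQ01]
  rw [Matrix.smul_mul, Matrix.smul_mul, Matrix.trace_smul]
  rw [Matrix.mul_sub, Matrix.mul_one, Matrix.trace_sub]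
  rw [hA1, hA2, smul_eq_mul]
  ring
end

section
/- With P, D⁺, Σ_τ, B(τ), X, X̃, Q_{ij}(τ) as described, assume Q₀₁(τ) is invertible and define W_τ = (−τ⁻²PD⁺Pᵀ) Σ_τ⁻¹ (Iₙ − X(XᵀΣ_τ⁻¹X)⁻¹XᵀΣ_τ⁻¹). Then tr(W_τ²) = τ⁻⁴ [ tr((D⁺B(τ))²) + tr(((Q₀₁(τ))⁻¹Q₁₂(τ))²) − 2 tr((Q₀₁(τ))⁻¹Q₂₃(τ)) ]. -/
open Matrix

/-- With the spectral setup and `Q_{ij}(τ) = X̃ᵀ(D⁺)ⁱ(B(τ))ʲX̃`, assuming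
`Q₀₁(τ)` invertible, the matrix
`W_τ = (−τ⁻²PD⁺Pᵀ) Σ_τ⁻¹ (Iₙ − X(XᵀΣ_τ⁻¹X)⁻¹XᵀΣ_τ⁻¹)` satisfies
`tr(W_τ²) = τ⁻⁴[tr((D⁺B(τ))²) + tr(((Q₀₁(τ))⁻¹Q₁₂(τ))²) − 2tr((Q₀₁(τ))⁻¹Q₂₃(τ))]`. -/
theorem trace_W_tau_sq
    (n p : ℕ) (hp : p < n) (τ : ℝ) (hτ : 0 < τ)
    (P : Matrix (Fin n) (Fin n) ℝ) (hP : Pᵀ * P = 1)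
    (d : Fin n → ℝ) (hd : ∀ i, 0 ≤ d i)
    (Dplus : Matrix (Fin n) (Fin n) ℝ) (hD : Dplus = Matrix.diagonal d)
    (S B : Matrix (Fin n) (Fin n) ℝ)
    (hS : S = P * ((1 : Matrix (Fin n) (Fin n) ℝ) + τ⁻¹ • Dplus) * Pᵀ)
    (hB : B = ((1 : Matrix (Fin n) (Fin n) ℝ) + τ⁻¹ • Dplus)⁻¹)
    (X : Matrix (Fin n) (Fin p) ℝ)
    (Xt : Matrix (Fin n) (Fin p) ℝ) (hXt : Xt = Pᵀ * X)
    (Q : ℕ → ℕ → Matrix (Fin p) (Fin p) ℝ)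
    (hQ : ∀ i j, Q i j = Xtᵀ * Dplus ^ i * B ^ j * Xt)
    (hinv : IsUnit (Q 0 1).det)
    (W : Matrix (Fin n) (Fin n) ℝ)
    (hW : W = (-(τ ^ 2)⁻¹ • (P * Dplus * Pᵀ)) * S⁻¹ *
      ((1 : Matrix (Fin n) (Fin n) ℝ) - X * (Xᵀ * S⁻¹ * X)⁻¹ * Xᵀ * S⁻¹)) :
    (W * W).trace = (τ ^ 4)⁻¹ * (((Dplus * B) * (Dplus * B)).trace + (((Q 0 1)⁻¹ * Q 1 2) * ((Q 0 1)⁻¹ * Q 1 2)).trace - 2 * ((Q 0 1)⁻¹ * Q 2 3).trace) := by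
  have hPPt : P * Pᵀ = 1 := mul_eq_one_comm.mp hP
  have hPl : ∀ (k : ℕ) (Y : Matrix (Fin n) (Fin k) ℝ), Pᵀ * (P * Y) = Y := by
    intro k Y; rw [← Matrix.mul_assoc, hP, Matrix.one_mul]
  have hPr : ∀ (k : ℕ) (Y : Matrix (Fin n) (Fin k) ℝ), P * (Pᵀ * Y) = Y := by
    intro k Y; rw [← Matrix.mul_assoc, hPPt, Matrix.one_mul]
  set a : Fin n → ℝ := fun i => 1 + τ⁻¹ * d i with ha
  have hapos : ∀ i, 0 < a i := by
    intro i
    have h1 : 0 ≤ τ⁻¹ * d i := mul_nonneg (inv_nonneg.mpr hτ.le) (hd i)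
    show (0:ℝ) < 1 + τ⁻¹ * d i; linarith
  have hA : (1 : Matrix (Fin n) (Fin n) ℝ) + τ⁻¹ • Dplus = Matrix.diagonal a := by
    rw [hD, ← Matrix.diagonal_one, ← Matrix.diagonal_smul, ← Matrix.diagonal_add]
    rfl
  have hBdiag : B = Matrix.diagonal (fun i => (a i)⁻¹) := by
    rw [hB, hA]
    apply Matrix.inv_eq_right_inv
    rw [Matrix.diagonal_mul_diagonal, ← Matrix.diagonal_one]
    apply congrArg Matrix.diagonal; funext i
    exact mul_inv_cancel₀ (hapos i).ne'
  have hAdet : IsUnit ((1 : Matrix (Fin n) (Fin n) ℝ) + τ⁻¹ • Dplus).det := by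
    rw [hA, Matrix.det_diagonal]
    exact isUnit_iff_ne_zero.mpr (Finset.prod_pos (fun i _ => hapos i)).ne'
  have hAB : ((1 : Matrix (Fin n) (Fin n) ℝ) + τ⁻¹ • Dplus) * B = 1 := by
    rw [hB]; exact Matrix.mul_nonsing_inv _ hAdet
  have hSinv : S⁻¹ = P * B * Pᵀ := by
    apply Matrix.inv_eq_right_inv
    rw [hS]
    have h1 : P * (1 + τ⁻¹ • Dplus) * Pᵀ * (P * B * Pᵀ)
        = P * ((1 + τ⁻¹ • Dplus) * (Pᵀ * P) * B) * Pᵀ := by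
      simp only [Matrix.mul_assoc]
    rw [h1, hP, Matrix.mul_one, hAB, Matrix.mul_one, hPPt]
  have hXtT : Xtᵀ = Xᵀ * P := by
    rw [hXt, Matrix.transpose_mul, Matrix.transpose_transpose]
  have hQ01 : Xᵀ * S⁻¹ * X = Q 0 1 := by
    rw [hSinv, hQ, hXtT, hXt]
    simp only [pow_zero, pow_one, Matrix.mul_one, Matrix.mul_assoc]
  set c := (Q 0 1)⁻¹ with hc
  set E := Dplus * B with hE
  set K := Xt * c * Xtᵀ * B with hK
  set M := E * (1 - K) with hM
  have hWM : W = (-(τ ^ 2)⁻¹) • (P * M * Pᵀ) := by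
    rw [hW, hQ01, hSinv, hM, hK, hE, hXtT, hXt]
    simp only [hc, Matrix.mul_sub, Matrix.sub_mul, Matrix.mul_one, Matrix.one_mul,
      Matrix.smul_mul, smul_sub, Matrix.mul_assoc, hPl, hPr]
  have htr : (W * W).trace = ((τ ^ 2)⁻¹ * (τ ^ 2)⁻¹) * (M * M).trace := by
    rw [hWM, Matrix.smul_mul, Matrix.mul_smul, smul_smul]
    have h1 : P * M * Pᵀ * (P * M * Pᵀ) = P * (M * M) * Pᵀ := by
      simp only [Matrix.mul_assoc, hPl, hPr]
    rw [h1, Matrix.trace_smul, Matrix.trace_mul_cycle, ← Matrix.mul_assoc, hP, Matrix.one_mul]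
    simp only [smul_eq_mul]; ring
  -- diagonal commutation facts
  have h2 : B * E = Dplus ^ 1 * B ^ 2 := by
    rw [hE, hD, hBdiag]
    simp only [Matrix.diagonal_mul_diagonal, Matrix.diagonal_pow]
    apply congrArg Matrix.diagonal; funext i
    simp only [Pi.mul_apply, Pi.pow_apply]; ring
  have h3 : B * E * E = Dplus ^ 2 * B ^ 3 := by
    rw [hE, hD, hBdiag]
    simp only [Matrix.diagonal_mul_diagonal, Matrix.diagonal_pow]
    apply congrArg Matrix.diagonal; funext i
    simp only [Pi.mul_apply, Pi.pow_apply]; ring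
  have hVU : (Xtᵀ * B) * (E * (Xt * c)) = Q 1 2 * c := by
    have h1 : (Xtᵀ * B) * (E * (Xt * c)) = Xtᵀ * (B * E) * Xt * c := by
      simp only [Matrix.mul_assoc]
    rw [h1, h2, hQ]
    simp only [Matrix.mul_assoc]
  have T2 : (E * (E * K)).trace = (c * Q 2 3).trace := by
    have h1 : E * (E * K) = (E * (E * (Xt * c))) * (Xtᵀ * B) := by
      rw [hK]; simp only [Matrix.mul_assoc]
    rw [h1, Matrix.trace_mul_comm]
    have h4 : (Xtᵀ * B) * (E * (E * (Xt * c))) = Q 2 3 * c := by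
      have h5 : (Xtᵀ * B) * (E * (E * (Xt * c))) = Xtᵀ * (B * E * E) * Xt * c := by
        simp only [Matrix.mul_assoc]
      rw [h5, h3, hQ]
      simp only [Matrix.mul_assoc]
    rw [h4, Matrix.trace_mul_comm]
  have T3 : ((E * K) * E).trace = (E * (E * K)).trace := Matrix.trace_mul_comm _ _
  have T4 : ((E * K) * (E * K)).trace = ((c * Q 1 2) * (c * Q 1 2)).trace := by
    have h1 : (E * K) * (E * K)
        = (E * (Xt * c)) * (((Xtᵀ * B) * (E * (Xt * c))) * (Xtᵀ * B)) := by
      rw [hK]; simp only [Matrix.mul_assoc]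
    rw [h1, Matrix.trace_mul_comm, hVU]
    have h6 : Q 1 2 * c * (Xtᵀ * B) * (E * (Xt * c))
        = Q 1 2 * c * ((Xtᵀ * B) * (E * (Xt * c))) := by
      simp only [Matrix.mul_assoc]
    rw [Matrix.mul_assoc] at h6 ⊢
    rw [h6, hVU]
    have h7 : Q 1 2 * c * (Q 1 2 * c) = Q 1 2 * (c * (Q 1 2 * c)) := by
      simp only [Matrix.mul_assoc]
    rw [h7, Matrix.trace_mul_comm]
    congr 1
    simp only [Matrix.mul_assoc]
  have hMM : M * M = E * E - E * (E * K) - (E * K) * E + (E * K) * (E * K) := by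
    rw [hM]
    noncomm_ring
  have hMMtr : (M * M).trace
      = (E * E).trace - (c * Q 2 3).trace - (c * Q 2 3).trace
        + ((c * Q 1 2) * (c * Q 1 2)).trace := by
    rw [hMM, Matrix.trace_add, Matrix.trace_sub, Matrix.trace_sub, T2, T3, T2, T4]
  rw [htr, hMMtr]
  ring
end

section
/- (Substance of Theorem 1.) With P, D⁺, Σ_τ, B(τ), X, X̃, Q_{ij}(τ) as described, assume Q₀₁(τ) is invertible and define W_τ = (−τ⁻²PD⁺Pᵀ) Σ_τ⁻¹ (Iₙ − X(XᵀΣ_τ⁻¹X)⁻¹XᵀΣ_τ⁻¹). Then tr(W_τ²) − (n−p)⁻¹(tr(W_τ))² = τ⁻⁴ { tr((D⁺B(τ))²) + tr(((Q₀₁(τ))⁻¹Q₁₂(τ))²) − 2 tr((Q₀₁(τ))⁻¹Q₂₃(τ)) − (n−p)⁻¹ [ tr((Q₀₁(τ))⁻¹Q₁₂(τ)) − tr(D⁺B(τ)) ]² }. -/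
open Matrix

/-- substance of Theorem 1: With the spectral setup and `Q_{ij}(τ) = X̃ᵀ(D⁺)ⁱ(B(τ))ʲX̃`, assuming
`Q₀₁(τ)` invertible, the matrix
`W_τ = (−τ⁻²PD⁺Pᵀ) Σ_τ⁻¹ (Iₙ − X(XᵀΣ_τ⁻¹X)⁻¹XᵀΣ_τ⁻¹)` satisfies
`tr(W_τ²) − (n−p)⁻¹(tr(W_τ))²` equals the trace expression appearing in the novel
reference prior of Theorem 1. -/
theorem reference_prior_trace_identity
    (n p : ℕ) (hp : p < n) (τ : ℝ) (hτ : 0 < τ)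
    (P : Matrix (Fin n) (Fin n) ℝ) (hP : Pᵀ * P = 1)
    (d : Fin n → ℝ) (hd : ∀ i, 0 ≤ d i)
    (Dplus : Matrix (Fin n) (Fin n) ℝ) (hD : Dplus = Matrix.diagonal d)
    (S B : Matrix (Fin n) (Fin n) ℝ)
    (hS : S = P * ((1 : Matrix (Fin n) (Fin n) ℝ) + τ⁻¹ • Dplus) * Pᵀ)
    (hB : B = ((1 : Matrix (Fin n) (Fin n) ℝ) + τ⁻¹ • Dplus)⁻¹)
    (X : Matrix (Fin n) (Fin p) ℝ)
    (Xt : Matrix (Fin n) (Fin p) ℝ) (hXt : Xt = Pᵀ * X)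
    (Q : ℕ → ℕ → Matrix (Fin p) (Fin p) ℝ)
    (hQ : ∀ i j, Q i j = Xtᵀ * Dplus ^ i * B ^ j * Xt)
    (hinv : IsUnit (Q 0 1).det)
    (W : Matrix (Fin n) (Fin n) ℝ)
    (hW : W = (-(τ ^ 2)⁻¹ • (P * Dplus * Pᵀ)) * S⁻¹ *
      ((1 : Matrix (Fin n) (Fin n) ℝ) - X * (Xᵀ * S⁻¹ * X)⁻¹ * Xᵀ * S⁻¹)) :
    (W * W).trace - ((n : ℝ) - p)⁻¹ * W.trace ^ 2 =
      (τ ^ 4)⁻¹ * (((Dplus * B) * (Dplus * B)).trace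
        + (((Q 0 1)⁻¹ * Q 1 2) * ((Q 0 1)⁻¹ * Q 1 2)).trace
        - 2 * ((Q 0 1)⁻¹ * Q 2 3).trace
        - ((n : ℝ) - p)⁻¹ * (((Q 0 1)⁻¹ * Q 1 2).trace - (Dplus * B).trace) ^ 2) := by
  have hPPt : P * Pᵀ = 1 := by rwa [mul_eq_one_comm] at hP
  have cancel₁ : ∀ {m : ℕ} (Z : Matrix (Fin n) (Fin m) ℝ), P * (Pᵀ * Z) = Z := by
    intro m Z; rw [← Matrix.mul_assoc, hPPt, Matrix.one_mul]
  have cancel₂ : ∀ {m : ℕ} (Z : Matrix (Fin n) (Fin m) ℝ), Pᵀ * (P * Z) = Z := by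
    intro m Z; rw [← Matrix.mul_assoc, hP, Matrix.one_mul]
  set f : Fin n → ℝ := fun i => 1 + τ⁻¹ * d i with hf
  have hfpos : ∀ i, 0 < f i := by
    intro i
    have : 0 ≤ τ⁻¹ * d i := mul_nonneg (by positivity) (hd i)
    simp only [hf]; linarith
  have hA : (1 : Matrix (Fin n) (Fin n) ℝ) + τ⁻¹ • Dplus = Matrix.diagonal f := by
    rw [hD]
    ext i j
    by_cases h : i = j <;> simp [Matrix.one_apply, Matrix.diagonal, h, hf]
  have hB' : B = Matrix.diagonal (fun i => (f i)⁻¹) := by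
    rw [hB, hA]
    apply Matrix.inv_eq_right_inv
    rw [Matrix.diagonal_mul_diagonal]
    ext i j
    rcases eq_or_ne i j with h | h
    · subst h; simp [mul_inv_cancel₀ (hfpos i).ne', Matrix.one_apply]
    · simp [Matrix.diagonal_apply_ne _ h, Matrix.one_apply_ne h]
  have hAdet : IsUnit ((1 : Matrix (Fin n) (Fin n) ℝ) + τ⁻¹ • Dplus).det := by
    rw [hA, Matrix.det_diagonal]
    exact (Finset.prod_pos (fun i _ => hfpos i)).ne'.isUnit
  have hAB : ((1 : Matrix (Fin n) (Fin n) ℝ) + τ⁻¹ • Dplus) * B = 1 := by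
    rw [hB]; exact Matrix.mul_nonsing_inv _ hAdet
  have hSinv : S⁻¹ = P * B * Pᵀ := by
    apply Matrix.inv_eq_right_inv
    rw [hS]
    calc P * ((1 : Matrix (Fin n) (Fin n) ℝ) + τ⁻¹ • Dplus) * Pᵀ * (P * B * Pᵀ)
        = P * (((1 : Matrix (Fin n) (Fin n) ℝ) + τ⁻¹ • Dplus) * (Pᵀ * (P * (B * Pᵀ)))) := by
          simp only [Matrix.mul_assoc]
      _ = P * (((1 : Matrix (Fin n) (Fin n) ℝ) + τ⁻¹ • Dplus) * (B * Pᵀ)) := by rw [cancel₂]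
      _ = 1 := by
          simp only [← Matrix.mul_assoc]
          rw [Matrix.mul_assoc P, hAB, Matrix.mul_one, hPPt]

  have hX : X = P * Xt := by rw [hXt]; exact (cancel₁ X).symm
  have hM : Xᵀ * S⁻¹ * X = Q 0 1 := by
    rw [hQ, hSinv]
    conv_lhs => rw [hX]
    simp only [Matrix.transpose_mul, Matrix.mul_assoc, pow_zero, pow_one, Matrix.mul_one,
      Matrix.one_mul]
    rw [cancel₂, cancel₂]
  have hcomm : Dplus * B = B * Dplus := by
    rw [hD, hB', Matrix.diagonal_mul_diagonal, Matrix.diagonal_mul_diagonal]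
    exact congrArg Matrix.diagonal (funext fun i => mul_comm _ _)
  set G : Matrix (Fin n) (Fin n) ℝ := Dplus * B with hG
  set Qi : Matrix (Fin p) (Fin p) ℝ := (Q 0 1)⁻¹ with hQi
  set C : Matrix (Fin n) (Fin n) ℝ := G - G * (Xt * (Qi * (Xtᵀ * B))) with hC
  have hBG : B * G = Dplus * (B * B) := by
    rw [hG, ← Matrix.mul_assoc, ← hcomm, Matrix.mul_assoc]
  have h12 : Xtᵀ * (B * (G * Xt)) = Q 1 2 := by
    rw [hQ, ← Matrix.mul_assoc B G, hBG]
    simp only [Matrix.mul_assoc, pow_one, pow_two]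
  have h23 : Xtᵀ * (B * (G * (G * Xt))) = Q 2 3 := by
    rw [hQ]
    have key : B * (G * (G * Xt)) = Dplus ^ 2 * B ^ 3 * Xt := by
      simp only [hG]
      simp only [← Matrix.mul_assoc]
      have e1 : B * Dplus = Dplus * B := hcomm.symm
      calc B * Dplus * B * Dplus * B * Xt = Dplus * B * B * Dplus * B * Xt := by rw [e1]
        _ = Dplus * B * (B * Dplus) * B * Xt := by simp only [Matrix.mul_assoc]
        _ = Dplus * B * (Dplus * B) * B * Xt := by rw [e1]
        _ = Dplus * (B * Dplus) * B * B * Xt := by simp only [Matrix.mul_assoc]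
        _ = Dplus * (Dplus * B) * B * B * Xt := by rw [e1]
        _ = Dplus ^ 2 * B ^ 3 * Xt := by
            simp only [pow_succ, pow_zero, Matrix.one_mul, Matrix.mul_assoc]
    rw [key]
    simp only [Matrix.mul_assoc]
  have hW' : W = (-(τ ^ 2)⁻¹) • (P * (C * Pᵀ)) := by
    rw [hW, hM, hSinv]
    conv_lhs => rw [hX]
    simp only [Matrix.smul_mul, hC, hQi]
    congr 1
    simp only [Matrix.transpose_mul, Matrix.mul_sub, Matrix.sub_mul, Matrix.mul_one,
      Matrix.mul_assoc, hG]
    rw [cancel₂, cancel₂, cancel₂]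
  have conj_tr : ∀ Z : Matrix (Fin n) (Fin n) ℝ, (P * (Z * Pᵀ)).trace = Z.trace := by
    intro Z
    rw [Matrix.trace_mul_comm P (Z * Pᵀ), Matrix.mul_assoc, hP, Matrix.mul_one]
  have htrW : W.trace = -((τ ^ 2)⁻¹ * C.trace) := by
    rw [hW', Matrix.trace_smul, conj_tr, smul_eq_mul]
    ring
  have htrWW : (W * W).trace = (τ ^ 4)⁻¹ * (C * C).trace := by
    rw [hW', Matrix.smul_mul, Matrix.mul_smul, smul_smul]
    have hcc : P * (C * Pᵀ) * (P * (C * Pᵀ)) = P * (C * C * Pᵀ) := by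
      simp only [Matrix.mul_assoc]
      rw [cancel₂]
    rw [hcc, Matrix.trace_smul, conj_tr, smul_eq_mul]
    have : -(τ ^ 2)⁻¹ * -(τ ^ 2)⁻¹ = (τ ^ 4)⁻¹ := by
      rw [neg_mul_neg, ← mul_inv, ← pow_add]
    rw [this]
  have htrC : C.trace = G.trace - (Qi * Q 1 2).trace := by
    rw [hC, Matrix.trace_sub]
    congr 1
    rw [show G * (Xt * (Qi * (Xtᵀ * B))) = (G * Xt) * (Qi * (Xtᵀ * B)) from by
      simp only [Matrix.mul_assoc]]
    rw [Matrix.trace_mul_comm]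
    simp only [Matrix.mul_assoc]
    rw [h12]
  have htrCC : (C * C).trace = (G * G).trace - 2 * (Qi * Q 2 3).trace
      + ((Qi * Q 1 2) * (Qi * Q 1 2)).trace := by
    rw [hC, Matrix.sub_mul, Matrix.mul_sub, Matrix.mul_sub, Matrix.trace_sub, Matrix.trace_sub,
      Matrix.trace_sub]
    have eb : (G * (G * (Xt * (Qi * (Xtᵀ * B))))).trace = (Qi * Q 2 3).trace := by
      rw [show G * (G * (Xt * (Qi * (Xtᵀ * B)))) = (G * (G * Xt)) * (Qi * (Xtᵀ * B)) from by
        simp only [Matrix.mul_assoc]]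
      rw [Matrix.trace_mul_comm]
      simp only [Matrix.mul_assoc]
      rw [h23]
    have ec : (G * (Xt * (Qi * (Xtᵀ * B))) * G).trace = (Qi * Q 2 3).trace := by
      rw [Matrix.trace_mul_comm]
      exact eb
    have ed : (G * (Xt * (Qi * (Xtᵀ * B))) * (G * (Xt * (Qi * (Xtᵀ * B))))).trace
        = ((Qi * Q 1 2) * (Qi * Q 1 2)).trace := by
      rw [show G * (Xt * (Qi * (Xtᵀ * B))) * (G * (Xt * (Qi * (Xtᵀ * B))))
          = (G * Xt) * ((Qi * (Xtᵀ * B)) * (G * (Xt * (Qi * (Xtᵀ * B))))) from by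
        simp only [Matrix.mul_assoc]]
      rw [Matrix.trace_mul_comm]
      simp only [Matrix.mul_assoc]
      rw [h12]
      rw [show Qi * (Xtᵀ * (B * (G * (Xt * (Qi * Q 1 2)))))
          = (Qi * (Xtᵀ * (B * (G * Xt)))) * (Qi * Q 1 2) from by
        simp only [Matrix.mul_assoc]]
      rw [h12]
      simp only [Matrix.mul_assoc]
    rw [eb, ec, ed]
    ring
  rw [htrWW, htrW, htrCC, htrC]
  ring
end

section
/- (Master Woodbury identity, Equation (11) of the paper.) Let D⁺ be a real n×n diagonal matrix with nonnegative diagonal entries, let E be the diagonal matrix of nonnegative square roots of the entries of D⁺ (so E² = D⁺), let τ > 0, and set B(τ) = (Iₙ + τ⁻¹D⁺)⁻¹. Let X̃ be a real n×p matrix with X̃ᵀX̃ invertible, set G̃ = Iₙ − X̃(X̃ᵀX̃)⁻¹X̃ᵀ, and assume Q₀₁(τ) := X̃ᵀB(τ)X̃ is invertible. Then the matrix τIₙ + EG̃E is invertible and (τIₙ + EG̃E)⁻¹ = τ⁻¹B(τ) + τ⁻²B(τ)EX̃(Q₀₁(τ))⁻¹X̃ᵀEB(τ). -/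
open Matrix

/-- master Woodbury identity, Equation (11) of the paper: With `D⁺`
diagonal with nonnegative entries, `E` its diagonal entrywise nonnegative square root
(`E² = D⁺`), `B(τ) = (Iₙ + τ⁻¹D⁺)⁻¹`, `G̃ = Iₙ − X̃(X̃ᵀX̃)⁻¹X̃ᵀ`, and
`Q₀₁(τ) = X̃ᵀB(τ)X̃` invertible, the matrix `τIₙ + EG̃E` is invertible and
`(τIₙ + EG̃E)⁻¹ = τ⁻¹B(τ) + τ⁻²B(τ)EX̃(Q₀₁(τ))⁻¹X̃ᵀEB(τ)`. -/
theorem woodbury_master_identity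
    (n p : ℕ) (hp : p < n) (τ : ℝ) (hτ : 0 < τ)
    (d : Fin n → ℝ) (hd : ∀ i, 0 ≤ d i)
    (Dplus : Matrix (Fin n) (Fin n) ℝ) (hD : Dplus = Matrix.diagonal d)
    (E : Matrix (Fin n) (Fin n) ℝ) (hE : E = Matrix.diagonal (fun i => Real.sqrt (d i)))
    (B : Matrix (Fin n) (Fin n) ℝ)
    (hB : B = ((1 : Matrix (Fin n) (Fin n) ℝ) + τ⁻¹ • Dplus)⁻¹)
    (Xt : Matrix (Fin n) (Fin p) ℝ) (hX : IsUnit (Xtᵀ * Xt).det)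
    (Gt : Matrix (Fin n) (Fin n) ℝ)
    (hGt : Gt = (1 : Matrix (Fin n) (Fin n) ℝ) - Xt * (Xtᵀ * Xt)⁻¹ * Xtᵀ)
    (Q01 : Matrix (Fin p) (Fin p) ℝ) (hQ01 : Q01 = Xtᵀ * B * Xt)
    (hQ : IsUnit Q01.det) :
    IsUnit (τ • (1 : Matrix (Fin n) (Fin n) ℝ) + E * Gt * E).det ∧
    (τ • (1 : Matrix (Fin n) (Fin n) ℝ) + E * Gt * E)⁻¹ =
      τ⁻¹ • B + (τ ^ 2)⁻¹ • (B * E * Xt * Q01⁻¹ * Xtᵀ * E * B) := by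
  have hτ0 : τ ≠ 0 := ne_of_gt hτ
  have ha : ∀ i, (1 + τ⁻¹ * d i) ≠ 0 := by
    intro i
    have h1 : 0 ≤ τ⁻¹ * d i := mul_nonneg (by positivity) (hd i)
    nlinarith
  -- B is diagonal
  have hA1 : (1 : Matrix (Fin n) (Fin n) ℝ) + τ⁻¹ • Dplus
      = Matrix.diagonal (fun i => 1 + τ⁻¹ * d i) := by
    rw [hD, ← Matrix.diagonal_one, ← Matrix.diagonal_smul, Matrix.diagonal_add]
    rfl
  have hBdiag : B = Matrix.diagonal (fun i => (1 + τ⁻¹ * d i)⁻¹) := by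
    rw [hB, hA1]
    refine Matrix.inv_eq_right_inv ?_
    rw [Matrix.diagonal_mul_diagonal, ← Matrix.diagonal_one,
      Matrix.diagonal_eq_diagonal_iff]
    intro i
    exact mul_inv_cancel₀ (ha i)
  have hEE : E * E = Dplus := by
    rw [hE, hD, Matrix.diagonal_mul_diagonal, Matrix.diagonal_eq_diagonal_iff]
    intro i
    exact Real.mul_self_sqrt (hd i)
  have hEBE : E * (B * E) = Dplus * B := by
    rw [hE, hBdiag, hD, Matrix.diagonal_mul_diagonal, Matrix.diagonal_mul_diagonal,
      Matrix.diagonal_mul_diagonal, Matrix.diagonal_eq_diagonal_iff]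
    intro i
    have h := Real.mul_self_sqrt (hd i)
    linear_combination (1 + τ⁻¹ * d i)⁻¹ * h
  -- key: (τ•1 + Dplus) * B = τ • 1
  have hkey : (τ • (1 : Matrix (Fin n) (Fin n) ℝ) + Dplus) * B
      = τ • (1 : Matrix (Fin n) (Fin n) ℝ) := by
    rw [hD, hBdiag, Matrix.smul_one_eq_diagonal, Matrix.diagonal_add,
      Matrix.diagonal_mul_diagonal, Matrix.diagonal_eq_diagonal_iff]
    intro i
    have h2 : τ + d i ≠ 0 := by nlinarith [hd i]
    field_simp
  -- Dplus * B = τ • 1 - τ • B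
  have hDB : Dplus * B = τ • (1 : Matrix (Fin n) (Fin n) ℝ) - τ • B := by
    rw [hD, hBdiag, Matrix.smul_one_eq_diagonal, ← Matrix.diagonal_smul,
      Matrix.diagonal_mul_diagonal, Matrix.diagonal_sub,
      Matrix.diagonal_eq_diagonal_iff]
    intro i
    simp only [Pi.sub_apply, Pi.smul_apply, smul_eq_mul]
    have h2 : τ + d i ≠ 0 := by nlinarith [hd i]
    field_simp
    ring
  -- useful inverses
  have hS2 : (Xtᵀ * Xt)⁻¹ * (Xtᵀ * Xt) = 1 := Matrix.nonsing_inv_mul _ hX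
  have hQ2 : Q01⁻¹ * Q01 = 1 := Matrix.nonsing_inv_mul _ hQ
  set S := (Xtᵀ * Xt)⁻¹ with hSdef
  set Qi := Q01⁻¹ with hQidef
  -- rewrite M
  have hM : τ • (1 : Matrix (Fin n) (Fin n) ℝ) + E * Gt * E
      = (τ • (1 : Matrix (Fin n) (Fin n) ℝ) + Dplus) - E * Xt * S * Xtᵀ * E := by
    rw [hGt, Matrix.mul_sub, Matrix.sub_mul, Matrix.mul_one, hEE]
    simp only [Matrix.mul_assoc]
    abel
  -- pointwise versions of the key identities
  have hkey' : ∀ (Z : Matrix (Fin n) (Fin n) ℝ),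
      (τ • (1 : Matrix (Fin n) (Fin n) ℝ) + Dplus) * (B * Z) = τ • Z := by
    intro Z
    rw [← mul_assoc, hkey, smul_mul_assoc, one_mul]
  have hEBE' : ∀ (Z : Matrix (Fin n) (Fin n) ℝ),
      E * (B * (E * Z)) = Dplus * (B * Z) := by
    intro Z
    rw [← Matrix.mul_assoc B E Z, ← Matrix.mul_assoc E (B * E) Z, hEBE, Matrix.mul_assoc]
  have hDB' : ∀ (Z : Matrix (Fin n) (Fin n) ℝ),
      Dplus * (B * Z) = τ • Z - τ • (B * Z) := by
    intro Z
    rw [← mul_assoc, hDB, Matrix.sub_mul, smul_mul_assoc, smul_mul_assoc, one_mul]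
  have hS2' : ∀ (Z : Matrix (Fin p) (Fin n) ℝ), S * (Xtᵀ * (Xt * Z)) = Z := by
    intro Z
    rw [← Matrix.mul_assoc Xtᵀ Xt Z, ← Matrix.mul_assoc, hS2, Matrix.one_mul]
  have hQ01' : ∀ (Z : Matrix (Fin p) (Fin n) ℝ), Xtᵀ * (B * (Xt * Z)) = Q01 * Z := by
    intro Z
    rw [hQ01, Matrix.mul_assoc, Matrix.mul_assoc, ← Matrix.mul_assoc B Xt Z]
  have hQ1' : ∀ (Z : Matrix (Fin p) (Fin n) ℝ), Q01 * (Qi * Z) = Z := by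
    intro Z
    rw [← Matrix.mul_assoc, Matrix.mul_nonsing_inv _ hQ, Matrix.one_mul]
  have hc1 : τ⁻¹ * τ = 1 := inv_mul_cancel₀ hτ0
  have hc2 : (τ ^ 2)⁻¹ * τ = τ⁻¹ := by field_simp
  have hMN : (τ • (1 : Matrix (Fin n) (Fin n) ℝ) + E * Gt * E) *
      (τ⁻¹ • B + (τ ^ 2)⁻¹ • (B * E * Xt * Qi * Xtᵀ * E * B)) = 1 := by
    rw [hM, Matrix.sub_mul, Matrix.mul_add, Matrix.mul_add]
    simp only [Matrix.mul_assoc, Matrix.mul_smul, Matrix.smul_mul]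
    simp only [hkey, hkey', hEBE', hDB', hQ01', hS2', hQ1', Matrix.mul_sub,
      Matrix.mul_smul, smul_sub, smul_smul, hc1, hc2, one_smul]
    abel
  exact ⟨Matrix.isUnit_det_of_right_inverse hMN, Matrix.inv_eq_right_inv hMN⟩
end

section
/- With D⁺, E, B(τ), X̃, G̃, Q_{ij}(τ) as described, assume X̃ᵀX̃ and Q₀₁(τ) are invertible and set V = (τIₙ + EG̃E)⁻¹. Then τ·tr(V) = tr(B(τ)) + τ⁻¹ tr((Q₀₁(τ))⁻¹Q₁₂(τ)). -/
open Matrix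

lemma diag_unit_and_inv {n : ℕ} (v : Fin n → ℝ) (hv : ∀ i, v i ≠ 0) :
    IsUnit (Matrix.diagonal v) ∧ (Matrix.diagonal v)⁻¹ = Matrix.diagonal (fun i => (v i)⁻¹) := by
  have h1 : Matrix.diagonal v * Matrix.diagonal (fun i => (v i)⁻¹) = 1 := by
    ext i j
    by_cases h : i = j
    · subst h; simp [Matrix.diagonal_apply, Matrix.one_apply, mul_inv_cancel₀ (hv i)]
    · simp [Matrix.diagonal_apply, Matrix.one_apply, h]
  refine ⟨(Matrix.isUnit_iff_isUnit_det _).mpr ?_, Matrix.inv_eq_right_inv h1⟩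
  rw [Matrix.det_diagonal]
  exact (Finset.prod_ne_zero_iff.mpr fun i _ => hv i).isUnit

/-- With the setup of the master Woodbury identity and
`V = (τIₙ + EG̃E)⁻¹`, the trace of `V` satisfies
`τ·tr(V) = tr(B(τ)) + τ⁻¹ tr((Q₀₁(τ))⁻¹Q₁₂(τ))`. -/
theorem tau_trace_V
    (n p : ℕ) (hp : p < n) (τ : ℝ) (hτ : 0 < τ)
    (d : Fin n → ℝ) (hd : ∀ i, 0 ≤ d i)
    (Dplus : Matrix (Fin n) (Fin n) ℝ) (hD : Dplus = Matrix.diagonal d)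
    (E : Matrix (Fin n) (Fin n) ℝ) (hE : E = Matrix.diagonal (fun i => Real.sqrt (d i)))
    (B : Matrix (Fin n) (Fin n) ℝ)
    (hB : B = ((1 : Matrix (Fin n) (Fin n) ℝ) + τ⁻¹ • Dplus)⁻¹)
    (Xt : Matrix (Fin n) (Fin p) ℝ) (hX : IsUnit (Xtᵀ * Xt).det)
    (Gt : Matrix (Fin n) (Fin n) ℝ)
    (hGt : Gt = (1 : Matrix (Fin n) (Fin n) ℝ) - Xt * (Xtᵀ * Xt)⁻¹ * Xtᵀ)
    (Q : ℕ → ℕ → Matrix (Fin p) (Fin p) ℝ)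
    (hQ : ∀ i j, Q i j = Xtᵀ * Dplus ^ i * B ^ j * Xt)
    (hQinv : IsUnit (Q 0 1).det)
    (V : Matrix (Fin n) (Fin n) ℝ)
    (hV : V = (τ • (1 : Matrix (Fin n) (Fin n) ℝ) + E * Gt * E)⁻¹) :
    τ * V.trace = B.trace + τ⁻¹ * ((Q 0 1)⁻¹ * Q 1 2).trace := by
  have hτ0 : τ ≠ 0 := ne_of_gt hτ
  have hpos : ∀ i, 0 < τ + d i := fun i => by have := hd i; linarith
  have hne : ∀ i, τ + d i ≠ 0 := fun i => (hpos i).ne'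
  subst hD hE hGt hV
  set s : Fin n → ℝ := fun i => Real.sqrt (d i) with hs
  set b : Fin n → ℝ := fun i => τ * (τ + d i)⁻¹ with hb
  -- B is diagonal with entries b
  have hone : (1 : Matrix (Fin n) (Fin n) ℝ) + τ⁻¹ • Matrix.diagonal d
      = Matrix.diagonal (fun i => 1 + τ⁻¹ * d i) := by
    ext i j
    by_cases h : i = j
    · subst h; simp [Matrix.diagonal_apply, Matrix.one_apply]
    · simp [Matrix.diagonal_apply, Matrix.one_apply, h]
  have hone_ne : ∀ i, (1 : ℝ) + τ⁻¹ * d i ≠ 0 := by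
    intro i
    have h1 : 0 ≤ τ⁻¹ * d i := mul_nonneg (le_of_lt (inv_pos.mpr hτ)) (hd i)
    positivity
  have hBdiag : B = Matrix.diagonal b := by
    rw [hB, hone, (diag_unit_and_inv _ hone_ne).2]
    refine congrArg Matrix.diagonal (funext fun i => ?_)
    rw [hb]
    field_simp
  -- the diagonal matrix A0
  set A0 : Matrix (Fin n) (Fin n) ℝ := Matrix.diagonal (fun i => τ + d i) with hA0def
  have hA0unit : IsUnit A0 := (diag_unit_and_inv _ hne).1
  have hA0inv : A0⁻¹ = Matrix.diagonal (fun i => (τ + d i)⁻¹) := (diag_unit_and_inv _ hne).2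
  have hss : Matrix.diagonal s * Matrix.diagonal s = Matrix.diagonal d := by
    rw [Matrix.diagonal_mul_diagonal]
    exact congrArg Matrix.diagonal (funext fun i => Real.mul_self_sqrt (hd i))
  have hA0eq : τ • (1 : Matrix (Fin n) (Fin n) ℝ) + Matrix.diagonal d = A0 := by
    rw [hA0def]
    ext i j
    by_cases h : i = j
    · subst h; simp [Matrix.diagonal_apply, Matrix.one_apply]
    · simp [Matrix.diagonal_apply, Matrix.one_apply, h]
  set U : Matrix (Fin n) (Fin p) ℝ := Matrix.diagonal s * Xt with hU
  set W : Matrix (Fin p) (Fin n) ℝ := Xtᵀ * Matrix.diagonal s with hW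
  set C : Matrix (Fin p) (Fin p) ℝ := -((Xtᵀ * Xt)⁻¹) with hC
  -- decomposition of the matrix being inverted
  have hM : τ • (1 : Matrix (Fin n) (Fin n) ℝ)
      + Matrix.diagonal s * ((1 : Matrix (Fin n) (Fin n) ℝ) - Xt * (Xtᵀ * Xt)⁻¹ * Xtᵀ)
        * Matrix.diagonal s
      = A0 + U * C * W := by
    rw [← hA0eq, hU, hC, hW, add_assoc]
    congr 1
    rw [← hss]
    simp only [Matrix.mul_sub, Matrix.sub_mul, Matrix.mul_add, Matrix.add_mul, Matrix.mul_one,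
      Matrix.one_mul, Matrix.mul_neg, Matrix.neg_mul, sub_eq_add_neg, Matrix.mul_assoc]
  -- unit hypotheses for Woodbury
  have hSunit : IsUnit (Xtᵀ * Xt) := (Matrix.isUnit_iff_isUnit_det _).mpr hX
  have hCunit : IsUnit C := by
    rw [hC]
    exact ((Matrix.isUnit_iff_isUnit_det _).mpr (Matrix.isUnit_nonsing_inv_det _ hX)).neg
  have hCinv : C⁻¹ = -(Xtᵀ * Xt) := by
    rw [hC]
    exact Matrix.inv_eq_right_inv (by rw [neg_mul_neg, Matrix.nonsing_inv_mul _ hX])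
  have hEAE : Matrix.diagonal s * A0⁻¹ * Matrix.diagonal s
      = Matrix.diagonal (fun i => d i * (τ + d i)⁻¹) := by
    rw [hA0inv, Matrix.diagonal_mul_diagonal, Matrix.diagonal_mul_diagonal]
    refine congrArg Matrix.diagonal (funext fun i => ?_)
    show s i * (τ + d i)⁻¹ * s i = d i * (τ + d i)⁻¹
    rw [show s i * (τ + d i)⁻¹ * s i = s i * s i * (τ + d i)⁻¹ by ring,
      Real.mul_self_sqrt (hd i)]
  have hWAU : W * A0⁻¹ * U = Xtᵀ * Matrix.diagonal (fun i => d i * (τ + d i)⁻¹) * Xt := by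
    rw [hW, hU, ← hEAE]
    simp only [Matrix.mul_assoc]
  have hQ01 : Q 0 1 = Xtᵀ * Matrix.diagonal b * Xt := by
    rw [hQ 0 1, pow_zero, pow_one, Matrix.mul_one, hBdiag]
  have hfb : Matrix.diagonal (fun i => d i * (τ + d i)⁻¹) + Matrix.diagonal b
      = (1 : Matrix (Fin n) (Fin n) ℝ) := by
    ext i j
    by_cases h : i = j
    · subst h
      simp only [Matrix.add_apply, Matrix.diagonal_apply_eq, Matrix.one_apply_eq, hb]
      field_simp [hne i]
      ring
    · simp [Matrix.diagonal_apply, Matrix.one_apply, h]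
  have hkey : C⁻¹ + W * A0⁻¹ * U = -(Q 0 1) := by
    rw [hCinv, hWAU, hQ01]
    have h2 : Xtᵀ * Matrix.diagonal (fun i => d i * (τ + d i)⁻¹) * Xt
        + Xtᵀ * Matrix.diagonal b * Xt = Xtᵀ * Xt := by
      calc Xtᵀ * Matrix.diagonal (fun i => d i * (τ + d i)⁻¹) * Xt
            + Xtᵀ * Matrix.diagonal b * Xt
          = Xtᵀ * (Matrix.diagonal (fun i => d i * (τ + d i)⁻¹) + Matrix.diagonal b) * Xt := by
            rw [Matrix.mul_add, Matrix.add_mul]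
        _ = Xtᵀ * Xt := by rw [hfb, Matrix.mul_one]
    rw [← h2]
    abel
  have hACunit : IsUnit (C⁻¹ + W * A0⁻¹ * U) := by
    rw [hkey]
    exact ((Matrix.isUnit_iff_isUnit_det _).mpr hQinv).neg
  have hQneg : (-(Q 0 1))⁻¹ = -((Q 0 1)⁻¹) :=
    Matrix.inv_eq_right_inv (by rw [neg_mul_neg, Matrix.mul_nonsing_inv _ hQinv])
  -- Woodbury
  have hwood := Matrix.add_mul_mul_inv_eq_sub A0 U C W hA0unit hCunit hACunit
  rw [hkey, hQneg] at hwood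
  have hVform : (τ • (1 : Matrix (Fin n) (Fin n) ℝ)
      + Matrix.diagonal s * ((1 : Matrix (Fin n) (Fin n) ℝ) - Xt * (Xtᵀ * Xt)⁻¹ * Xtᵀ)
        * Matrix.diagonal s)⁻¹
      = A0⁻¹ + A0⁻¹ * U * (Q 0 1)⁻¹ * W * A0⁻¹ := by
    rw [hM, hwood]
    simp only [Matrix.mul_neg, Matrix.neg_mul, sub_neg_eq_add]
  rw [hVform]
  -- trace computation
  have htrB : B.trace = τ * A0⁻¹.trace := by
    rw [hBdiag, hA0inv, Matrix.trace_diagonal, Matrix.trace_diagonal, Finset.mul_sum]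
  have hEAAE : Matrix.diagonal s * (A0⁻¹ * A0⁻¹) * Matrix.diagonal s
      = Matrix.diagonal (fun i => d i * ((τ + d i)⁻¹ * (τ + d i)⁻¹)) := by
    rw [hA0inv, Matrix.diagonal_mul_diagonal, Matrix.diagonal_mul_diagonal,
      Matrix.diagonal_mul_diagonal]
    refine congrArg Matrix.diagonal (funext fun i => ?_)
    show s i * ((τ + d i)⁻¹ * (τ + d i)⁻¹) * s i = d i * ((τ + d i)⁻¹ * (τ + d i)⁻¹)
    rw [show s i * ((τ + d i)⁻¹ * (τ + d i)⁻¹) * s i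
      = s i * s i * ((τ + d i)⁻¹ * (τ + d i)⁻¹) by ring, Real.mul_self_sqrt (hd i)]
  have hQ12 : Q 1 2 = Xtᵀ * Matrix.diagonal (fun i => d i * (b i * b i)) * Xt := by
    rw [hQ 1 2, pow_one, hBdiag, pow_two, Matrix.diagonal_mul_diagonal,
      Matrix.mul_assoc Xtᵀ, Matrix.diagonal_mul_diagonal]
  have hdiagscale : Matrix.diagonal (fun i => d i * ((τ + d i)⁻¹ * (τ + d i)⁻¹))
      = (τ⁻¹ * τ⁻¹) • Matrix.diagonal (fun i => d i * (b i * b i)) := by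
    ext i j
    by_cases h : i = j
    · subst h
      simp only [Matrix.diagonal_apply_eq, Matrix.smul_apply, smul_eq_mul, Pi.mul_apply, hb]
      field_simp [hne i]
      try ring
    · simp [Matrix.diagonal_apply, h]
  have hWAAU : W * (A0⁻¹ * A0⁻¹) * U = (τ⁻¹ * τ⁻¹) • Q 1 2 := by
    rw [hW, hU]
    calc Xtᵀ * Matrix.diagonal s * (A0⁻¹ * A0⁻¹) * (Matrix.diagonal s * Xt)
        = Xtᵀ * (Matrix.diagonal s * (A0⁻¹ * A0⁻¹) * Matrix.diagonal s) * Xt := by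
          simp only [Matrix.mul_assoc]
      _ = (τ⁻¹ * τ⁻¹) • Q 1 2 := by
          rw [hEAAE, hdiagscale, hQ12, Matrix.mul_smul, Matrix.smul_mul]
  have htr2 : (A0⁻¹ * U * (Q 0 1)⁻¹ * W * A0⁻¹).trace
      = (τ⁻¹ * τ⁻¹) * ((Q 0 1)⁻¹ * Q 1 2).trace := by
    calc (A0⁻¹ * U * (Q 0 1)⁻¹ * W * A0⁻¹).trace
        = ((A0⁻¹ * U) * ((Q 0 1)⁻¹ * W * A0⁻¹)).trace := by
          simp only [Matrix.mul_assoc]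
      _ = (((Q 0 1)⁻¹ * W * A0⁻¹) * (A0⁻¹ * U)).trace := Matrix.trace_mul_comm _ _
      _ = ((Q 0 1)⁻¹ * (W * (A0⁻¹ * A0⁻¹) * U)).trace := by
          simp only [Matrix.mul_assoc]
      _ = ((Q 0 1)⁻¹ * ((τ⁻¹ * τ⁻¹) • Q 1 2)).trace := by rw [hWAAU]
      _ = (τ⁻¹ * τ⁻¹) * ((Q 0 1)⁻¹ * Q 1 2).trace := by
          rw [Matrix.mul_smul, Matrix.trace_smul, smul_eq_mul]
  rw [Matrix.trace_add, htr2, htrB]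
  field_simp
end

section
/- With D⁺, E, B(τ), X̃, G̃, Q_{ij}(τ) as described, assume X̃ᵀX̃ and Q₀₁(τ) are invertible and set V = (τIₙ + EG̃E)⁻¹. Then τ²·tr(V²) = tr((B(τ))²) + 2τ⁻¹ tr((Q₀₁(τ))⁻¹Q₁₃(τ)) + τ⁻² tr(((Q₀₁(τ))⁻¹Q₁₂(τ))²). -/
/-! Since `E` and `B` are commuting diagonal matrices with `(τ + E²) B = τ`, one has
`E B E = τ (1 - B)`. Writing `τ + E G̃ E = (τ + E²) - E X̃ (X̃ᵀX̃)⁻¹ X̃ᵀ E`, Woodbury's identity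
gives `V = τ⁻¹ B + τ⁻² B E X̃ Q₀₁⁻¹ X̃ᵀ E B`: the capacitance matrix
`X̃ᵀX̃ - τ⁻¹ X̃ᵀ E B E X̃` collapses to `Q₀₁ = X̃ᵀ B X̃`. Squaring `τ V` and cycling traces turns
the cross and quadratic terms into `tr(Q₀₁⁻¹ Q₁₃)` and `tr((Q₀₁⁻¹ Q₁₂)²)`. -/

open Matrix

section Woodbury

variable {K n p : Type*} [Field K] [Fintype n] [DecidableEq n] [Fintype p] [DecidableEq p]
  {τ : K} {E B : Matrix n n K} (X : Matrix n p K)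

theorem mul_mul_eq_smul_one_sub (hEB : Commute E B) (hB : (τ • 1 + E * E) * B = τ • 1) :
    E * B * E = τ • (1 - B) := by
  rw [Matrix.mul_assoc, ← hEB.eq, ← Matrix.mul_assoc, smul_sub, ← hB, Matrix.add_mul,
    Matrix.smul_mul, Matrix.one_mul, add_sub_cancel_left]

theorem inv_smul_one_add_mul_sub_proj_mul (hτ : τ ≠ 0) (hEB : Commute E B)
    (hB : (τ • 1 + E * E) * B = τ • 1) (hX : IsUnit (Xᵀ * X).det)
    (hQ : IsUnit (Xᵀ * B * X).det) :
    (τ • 1 + E * (1 - X * (Xᵀ * X)⁻¹ * Xᵀ) * E)⁻¹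
      = τ⁻¹ • B + (τ ^ 2)⁻¹ • (B * E * X * (Xᵀ * B * X)⁻¹ * Xᵀ * E * B) := by
  have hright : (τ • 1 + E * E) * (τ⁻¹ • B) = 1 := by
    rw [Matrix.mul_smul, hB, smul_smul, inv_mul_cancel₀ hτ, one_smul]
  have hA : (τ • 1 + E * E)⁻¹ = τ⁻¹ • B := inv_eq_right_inv hright
  have hS : IsUnit (Xᵀ * X)⁻¹ := (isUnit_iff_isUnit_det _).2 (isUnit_nonsing_inv_det _ hX)
  have hcore : ((Xᵀ * X)⁻¹)⁻¹ + -(Xᵀ * E) * (τ • 1 + E * E)⁻¹ * (E * X) = Xᵀ * B * X := by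
    have hEBE : Xᵀ * E * B * (E * X) = τ • (Xᵀ * X - Xᵀ * B * X) := by
      rw [show Xᵀ * E * B * (E * X) = Xᵀ * (E * B * E) * X by simp only [Matrix.mul_assoc],
        mul_mul_eq_smul_one_sub hEB hB]
      simp [Matrix.mul_sub, Matrix.sub_mul]
    rw [nonsing_inv_nonsing_inv _ hX, hA, Matrix.mul_smul, Matrix.neg_mul, Matrix.smul_mul,
      Matrix.neg_mul, hEBE, smul_neg, smul_smul, inv_mul_cancel₀ hτ, one_smul]
    abel
  have hsplit : τ • 1 + E * (1 - X * (Xᵀ * X)⁻¹ * Xᵀ) * E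
      = τ • 1 + E * E + (E * X) * (Xᵀ * X)⁻¹ * -(Xᵀ * E) := by
    simp only [Matrix.mul_sub, Matrix.sub_mul, Matrix.mul_one, Matrix.mul_neg, Matrix.mul_assoc]
    abel
  have hA' : IsUnit (τ • 1 + E * E) :=
    (isUnit_iff_isUnit_det _).2 (isUnit_det_of_right_inverse hright)
  have hcap : IsUnit (((Xᵀ * X)⁻¹)⁻¹ + -(Xᵀ * E) * (τ • 1 + E * E)⁻¹ * (E * X)) := by
    rw [hcore]
    exact (isUnit_iff_isUnit_det _).2 hQ
  rw [hsplit, add_mul_mul_inv_eq_sub _ _ _ _ hA' hS hcap, hcore, hA]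
  simp only [Matrix.smul_mul, Matrix.mul_smul, Matrix.mul_neg, Matrix.neg_mul, smul_neg,
    sub_neg_eq_add, smul_smul, Matrix.mul_assoc, sq, mul_inv]

theorem mul_pow_mul_eq_mul_mul_pow (hEB : Commute E B) (k : ℕ) :
    E * B ^ k * E = E * E * B ^ k := by
  rw [Matrix.mul_assoc, ← (hEB.pow_right k).eq, Matrix.mul_assoc]

theorem sq_mul_trace_inv_mul_inv (hτ : τ ≠ 0) (hEB : Commute E B)
    (hB : (τ • 1 + E * E) * B = τ • 1) (hX : IsUnit (Xᵀ * X).det)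
    (hQ : IsUnit (Xᵀ * B * X).det) :
    τ ^ 2 * ((τ • 1 + E * (1 - X * (Xᵀ * X)⁻¹ * Xᵀ) * E)⁻¹
        * (τ • 1 + E * (1 - X * (Xᵀ * X)⁻¹ * Xᵀ) * E)⁻¹).trace
      = (B * B).trace + 2 * τ⁻¹ * ((Xᵀ * B * X)⁻¹ * (Xᵀ * (E * E) * B ^ 3 * X)).trace
        + (τ ^ 2)⁻¹ * (((Xᵀ * B * X)⁻¹ * (Xᵀ * (E * E) * B ^ 2 * X))
          * ((Xᵀ * B * X)⁻¹ * (Xᵀ * (E * E) * B ^ 2 * X))).trace := by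
  rw [inv_smul_one_add_mul_sub_proj_mul X hτ hEB hB hX hQ]
  set P := B * (E * X)
  set R := (Xᵀ * B * X)⁻¹ * (Xᵀ * E * B)
  have hcompress :
      ∀ k, R * (B ^ k * P) = (Xᵀ * B * X)⁻¹ * (Xᵀ * (E * E) * B ^ (k + 2) * X) := by
    intro k
    rw [show Xᵀ * (E * E) * B ^ (k + 2) * X = Xᵀ * (E * E * B ^ (k + 2)) * X by
      simp only [Matrix.mul_assoc], ← mul_pow_mul_eq_mul_mul_pow hEB]
    simp only [R, P, pow_succ, Matrix.mul_assoc]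
    rw [← Matrix.mul_assoc B (B ^ k), (Commute.self_pow B k).eq, Matrix.mul_assoc]
  have hM : B * E * X * (Xᵀ * B * X)⁻¹ * Xᵀ * E * B = P * R := by
    simp only [P, R, Matrix.mul_assoc]
  have hRP : R * P = (Xᵀ * B * X)⁻¹ * (Xᵀ * (E * E) * B ^ 2 * X) := by
    simpa using hcompress 0
  have hBM : (B * (P * R)).trace = ((Xᵀ * B * X)⁻¹ * (Xᵀ * (E * E) * B ^ 3 * X)).trace := by
    rw [← Matrix.mul_assoc, trace_mul_comm, ← hcompress 1, pow_one]
  have hMM : (P * R * (P * R)).trace = ((Xᵀ * B * X)⁻¹ * (Xᵀ * (E * E) * B ^ 2 * X)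
      * ((Xᵀ * B * X)⁻¹ * (Xᵀ * (E * E) * B ^ 2 * X))).trace := by
    rw [show P * R * (P * R) = P * (R * P * R) by simp only [Matrix.mul_assoc], trace_mul_comm,
      Matrix.mul_assoc (R * P), hRP]
  rw [hM]
  simp only [Matrix.add_mul, Matrix.mul_add, Matrix.smul_mul, Matrix.mul_smul,
    trace_add, trace_smul, smul_eq_mul]
  rw [trace_mul_comm (P * R) B, hBM, hMM]
  field_simp
  ring

end Woodbury

section Diagonal

variable {K n : Type*} [Field K] [Fintype n] [DecidableEq n] {d : n → K}

theorem one_add_smul_diagonal_inv {c : K} (h : ∀ i, 1 + c * d i ≠ 0) :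
    ((1 : Matrix n n K) + c • diagonal d)⁻¹ = diagonal fun i => (1 + c * d i)⁻¹ := by
  refine inv_eq_right_inv ?_
  rw [← diagonal_one, ← diagonal_smul, diagonal_add, diagonal_mul_diagonal]
  congr 1
  funext i
  exact mul_inv_cancel₀ (h i)

theorem smul_one_add_diagonal_mul_inv {τ : K} (hτ : τ ≠ 0) (h : ∀ i, 1 + τ⁻¹ * d i ≠ 0) :
    (τ • 1 + diagonal d) * (1 + τ⁻¹ • diagonal d)⁻¹ = τ • (1 : Matrix n n K) := by
  rw [one_add_smul_diagonal_inv h, smul_one_eq_diagonal, diagonal_add, diagonal_mul_diagonal]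
  congr 1
  funext i
  rw [show τ + d i = τ * (1 + τ⁻¹ * d i) by field_simp, mul_assoc, mul_inv_cancel₀ (h i),
    mul_one]

end Diagonal

theorem tau_sq_trace_V_sq_general
    (n p : ℕ) (τ : ℝ) (hτ : 0 < τ)
    (d : Fin n → ℝ) (hd : ∀ i, 0 ≤ d i)
    (Dplus : Matrix (Fin n) (Fin n) ℝ) (hD : Dplus = Matrix.diagonal d)
    (E : Matrix (Fin n) (Fin n) ℝ) (hE : E = Matrix.diagonal (fun i => Real.sqrt (d i)))
    (B : Matrix (Fin n) (Fin n) ℝ)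
    (hB : B = ((1 : Matrix (Fin n) (Fin n) ℝ) + τ⁻¹ • Dplus)⁻¹)
    (Xt : Matrix (Fin n) (Fin p) ℝ) (hX : IsUnit (Xtᵀ * Xt).det)
    (Gt : Matrix (Fin n) (Fin n) ℝ)
    (hGt : Gt = (1 : Matrix (Fin n) (Fin n) ℝ) - Xt * (Xtᵀ * Xt)⁻¹ * Xtᵀ)
    (Q : ℕ → ℕ → Matrix (Fin p) (Fin p) ℝ)
    (hQ : ∀ i j, Q i j = Xtᵀ * Dplus ^ i * B ^ j * Xt)
    (hQinv : IsUnit (Q 0 1).det)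
    (V : Matrix (Fin n) (Fin n) ℝ)
    (hV : V = (τ • (1 : Matrix (Fin n) (Fin n) ℝ) + E * Gt * E)⁻¹) :
    τ ^ 2 * (V * V).trace = (B * B).trace + 2 * τ⁻¹ * ((Q 0 1)⁻¹ * Q 1 3).trace
      + (τ ^ 2)⁻¹ * (((Q 0 1)⁻¹ * Q 1 2) * ((Q 0 1)⁻¹ * Q 1 2)).trace := by
  have hEE : E * E = Dplus := by
    rw [hE, hD, diagonal_mul_diagonal]
    congr 1
    funext i
    exact Real.mul_self_sqrt (hd i)
  have hpos : ∀ i, 1 + τ⁻¹ * d i ≠ 0 := fun i => by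
    have := hd i
    positivity
  have hEB : Commute E B := by
    rw [hE, hB, hD, one_add_smul_diagonal_inv hpos]
    exact commute_diagonal _ _
  have hBinv : (τ • 1 + E * E) * B = τ • 1 := by
    rw [hEE, hB, hD, smul_one_add_diagonal_mul_inv hτ.ne' hpos]
  have hQ01 : Q 0 1 = Xtᵀ * B * Xt := by simp [hQ]
  have hQ1 : ∀ j, Q 1 j = Xtᵀ * (E * E) * B ^ j * Xt := by simp [hQ, hEE]
  rw [hV, hGt, sq_mul_trace_inv_mul_inv Xt hτ.ne' hEB hBinv hX (hQ01 ▸ hQinv), hQ01, hQ1, hQ1]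

/-- With the setup of the master Woodbury identity and
`V = (τIₙ + EG̃E)⁻¹`, the trace of `V` satisfies
`τ²·tr(V²) = tr((B(τ))²) + 2τ⁻¹ tr((Q₀₁(τ))⁻¹Q₁₃(τ)) + τ⁻² tr(((Q₀₁(τ))⁻¹Q₁₂(τ))²)`. -/
theorem tau_sq_trace_V_sq
    (n p : ℕ) (hp : p < n) (τ : ℝ) (hτ : 0 < τ)
    (d : Fin n → ℝ) (hd : ∀ i, 0 ≤ d i)
    (Dplus : Matrix (Fin n) (Fin n) ℝ) (hD : Dplus = Matrix.diagonal d)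
    (E : Matrix (Fin n) (Fin n) ℝ) (hE : E = Matrix.diagonal (fun i => Real.sqrt (d i)))
    (B : Matrix (Fin n) (Fin n) ℝ)
    (hB : B = ((1 : Matrix (Fin n) (Fin n) ℝ) + τ⁻¹ • Dplus)⁻¹)
    (Xt : Matrix (Fin n) (Fin p) ℝ) (hX : IsUnit (Xtᵀ * Xt).det)
    (Gt : Matrix (Fin n) (Fin n) ℝ)
    (hGt : Gt = (1 : Matrix (Fin n) (Fin n) ℝ) - Xt * (Xtᵀ * Xt)⁻¹ * Xtᵀ)
    (Q : ℕ → ℕ → Matrix (Fin p) (Fin p) ℝ)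
    (hQ : ∀ i j, Q i j = Xtᵀ * Dplus ^ i * B ^ j * Xt)
    (hQinv : IsUnit (Q 0 1).det)
    (V : Matrix (Fin n) (Fin n) ℝ)
    (hV : V = (τ • (1 : Matrix (Fin n) (Fin n) ℝ) + E * Gt * E)⁻¹) :
    τ ^ 2 * (V * V).trace = (B * B).trace + 2 * τ⁻¹ * ((Q 0 1)⁻¹ * Q 1 3).trace
      + (τ ^ 2)⁻¹ * (((Q 0 1)⁻¹ * Q 1 2) * ((Q 0 1)⁻¹ * Q 1 2)).trace :=
  tau_sq_trace_V_sq_general n p τ hτ d hd Dplus hD E hE B hB Xt hX Gt hGt Q hQ hQinv V hV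
end

section
/- (Equation (T1-final) of the paper.) With D⁺, E, B(τ), X̃, G̃, Q_{ij}(τ) as described, assume X̃ᵀX̃ and Q₀₁(τ) are invertible, and let μ₁, …, μₙ be the eigenvalues (with multiplicity) of the real symmetric positive semidefinite matrix A = EG̃E. Then Σ_{i=1}^{n} μᵢ/(τ + μᵢ) = τ⁻¹ [ tr(D⁺B(τ)) − tr((Q₀₁(τ))⁻¹Q₁₂(τ)) ]. -/
/-!
Since `μ / (τ + μ) = 1 - τ (τ + μ)⁻¹`, the left-hand side is `n - τ tr((τ + A)⁻¹)`.
Write `τ + A = (τ + D⁺) - (E X̃) (X̃ᵀ X̃)⁻¹ (E X̃)ᵀ` with `(τ + D⁺)⁻¹ = τ⁻¹ B`. Because `E` commutes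
with `B` and `(1 + τ⁻¹ D⁺) B = 1`, the capacitance matrix of the Woodbury identity is
`X̃ᵀ X̃ - τ⁻¹ X̃ᵀ D⁺ B X̃ = X̃ᵀ B X̃ = Q₀₁`, so
`(τ + A)⁻¹ = τ⁻¹ B + τ⁻² B E X̃ Q₀₁⁻¹ X̃ᵀ E B`, whose trace is `τ⁻¹ tr B + τ⁻² tr(Q₀₁⁻¹ Q₁₂)`.
Finally `n = tr B + τ⁻¹ tr(D⁺ B)`.
-/

open Matrix

namespace Matrix

variable {ι κ : Type*} [Fintype ι] [DecidableEq ι] [Fintype κ] [DecidableEq κ]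

theorem IsHermitian.trace_inv_smul_one_add {A : Matrix ι ι ℝ} (hA : A.IsHermitian) {τ : ℝ}
    (h : ∀ i, τ + hA.eigenvalues i ≠ 0) :
    ((τ • 1 + A)⁻¹).trace = ∑ i, (τ + hA.eigenvalues i)⁻¹ := by
  set U : Matrix ι ι ℝ := ↑hA.eigenvectorUnitary
  have hUU : star U * U = 1 := Unitary.coe_star_mul_self _
  have hUU' : U * star U = 1 := Unitary.coe_mul_star_self _
  have hA' : τ • 1 + A = U * diagonal (fun i ↦ τ + hA.eigenvalues i) * star U := by
    have hdiag : diagonal (fun i ↦ τ + hA.eigenvalues i) = τ • 1 + diagonal hA.eigenvalues := by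
      rw [← diagonal_one, ← diagonal_smul, diagonal_add]; simp
    conv_lhs => rw [hA.spectral_theorem, Unitary.conjStarAlgAut_apply]
    rw [hdiag, Matrix.mul_add, Matrix.add_mul, Matrix.mul_smul, Matrix.smul_mul, Matrix.mul_one,
      hUU']
    rfl
  have hinv : (τ • 1 + A)⁻¹ = U * diagonal (fun i ↦ (τ + hA.eigenvalues i)⁻¹) * star U := by
    refine inv_eq_right_inv ?_
    calc _ = U * (diagonal (fun i ↦ τ + hA.eigenvalues i) * (star U * U) *
          diagonal (fun i ↦ (τ + hA.eigenvalues i)⁻¹)) * star U := by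
          rw [hA']; simp only [Matrix.mul_assoc]
      _ = 1 := by
        rw [hUU, Matrix.mul_one, diagonal_mul_diagonal]
        simp [h, hUU']
  rw [hinv, trace_mul_cycle, hUU, one_mul, trace_diagonal]

theorem PosSemidef.sum_eigenvalues_div_add {A : Matrix ι ι ℝ} (hA : A.PosSemidef) {τ : ℝ}
    (hτ : 0 < τ) :
    ∑ i, hA.isHermitian.eigenvalues i / (τ + hA.isHermitian.eigenvalues i) =
      Fintype.card ι - τ * ((τ • 1 + A)⁻¹).trace := by
  have hpos : ∀ i, 0 < τ + hA.isHermitian.eigenvalues i := fun i ↦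
    add_pos_of_pos_of_nonneg hτ (hA.eigenvalues_nonneg i)
  rw [hA.isHermitian.trace_inv_smul_one_add fun i ↦ (hpos i).ne', Finset.mul_sum]
  calc _ = ∑ i, (1 - τ * (τ + hA.isHermitian.eigenvalues i)⁻¹) :=
        Finset.sum_congr rfl fun i _ ↦ by field_simp [(hpos i).ne']; ring
    _ = _ := by simp [Finset.sum_sub_distrib]

theorem commute_of_commute_of_mul_eq_one {R : Type*} [CommRing R] {a p b : Matrix ι ι R}
    (ha : Commute a p) (hpb : p * b = 1) : Commute a b := by
  have hbp : b * p = 1 := mul_eq_one_comm.mp hpb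
  calc a * b = b * p * a * b := by rw [hbp, Matrix.one_mul]
    _ = b * a * (p * b) := by rw [Matrix.mul_assoc b p, ← ha.eq]; simp only [Matrix.mul_assoc]
    _ = b * a := by rw [hpb, Matrix.mul_one]

section Resolvent

variable {τ : ℝ} {D E B : Matrix ι ι ℝ}

theorem commute_of_mul_self_eq_of_one_add_smul_mul_eq_one (hE : E * E = D)
    (hB : (1 + τ⁻¹ • D) * B = 1) : Commute E B := by
  have hED : Commute E D := hE ▸ (Commute.refl E).mul_right (Commute.refl E)
  exact commute_of_commute_of_mul_eq_one ((Commute.one_right E).add_right (hED.smul_right τ⁻¹)) hB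

theorem card_eq_trace_add_inv_mul_trace_mul (hB : (1 + τ⁻¹ • D) * B = 1) :
    (Fintype.card ι : ℝ) = B.trace + τ⁻¹ * (D * B).trace := by
  rw [← trace_one, ← hB, Matrix.add_mul, Matrix.one_mul, Matrix.smul_mul, trace_add, trace_smul,
    smul_eq_mul]

theorem inv_smul_one_add_mul_sub_proj_mul (hτ : τ ≠ 0) (hE : E * E = D)
    (hB : (1 + τ⁻¹ • D) * B = 1) {X : Matrix ι κ ℝ} (hX : IsUnit (Xᵀ * X).det)
    (hQ : IsUnit (Xᵀ * B * X).det) :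
    (τ • 1 + E * (1 - X * (Xᵀ * X)⁻¹ * Xᵀ) * E)⁻¹ =
      τ⁻¹ • B + τ⁻¹ ^ 2 • (B * E * X * (Xᵀ * B * X)⁻¹ * Xᵀ * E * B) := by
  have hτD : (τ • 1 + D) * (τ⁻¹ • B) = 1 := by
    have hfactor : τ • 1 + D = τ • (1 + τ⁻¹ • D) := by
      rw [smul_add, smul_smul, mul_inv_cancel₀ hτ, one_smul]
    rw [hfactor, Matrix.smul_mul, Matrix.mul_smul, smul_smul, mul_inv_cancel₀ hτ, one_smul, hB]
  have hEBE : E * B * E = D * B := by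
    rw [Matrix.mul_assoc, ← (commute_of_mul_self_eq_of_one_add_smul_mul_eq_one hE hB).eq,
      ← Matrix.mul_assoc, hE]
  have hsplit : τ • 1 + E * (1 - X * (Xᵀ * X)⁻¹ * Xᵀ) * E =
      (τ • 1 + D) + (E * X) * (Xᵀ * X)⁻¹ * -(Xᵀ * E) := by
    rw [← hE]; simp only [sub_eq_add_neg, Matrix.add_mul, Matrix.mul_add, Matrix.one_mul,
      Matrix.neg_mul, Matrix.mul_neg, Matrix.mul_assoc, add_assoc]
  have hcore : ((Xᵀ * X)⁻¹)⁻¹ + -(Xᵀ * E) * (τ • 1 + D)⁻¹ * (E * X) = Xᵀ * B * X := by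
    rw [nonsing_inv_nonsing_inv _ hX, inv_eq_right_inv hτD]
    calc Xᵀ * X + -(Xᵀ * E) * τ⁻¹ • B * (E * X)
        = Xᵀ * ((1 + τ⁻¹ • D) * B) * X - τ⁻¹ • (Xᵀ * (E * B * E) * X) := by
          rw [hB, Matrix.mul_one, sub_eq_add_neg]
          simp only [Matrix.neg_mul, Matrix.smul_mul, Matrix.mul_smul, Matrix.mul_assoc, smul_neg]
      _ = Xᵀ * B * X := by
          rw [hEBE]
          simp only [Matrix.add_mul, Matrix.mul_add, Matrix.one_mul, Matrix.smul_mul,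
            Matrix.mul_smul, Matrix.mul_assoc]
          abel
  have hτDunit : IsUnit (τ • 1 + D) :=
    (isUnit_iff_isUnit_det _).mpr (isUnit_det_of_right_inverse hτD)
  have hMunit : IsUnit (Xᵀ * X)⁻¹ := (isUnit_iff_isUnit_det _).mpr (isUnit_nonsing_inv_det _ hX)
  have hQunit : IsUnit (Xᵀ * B * X) := (isUnit_iff_isUnit_det _).mpr hQ
  rw [hsplit, add_mul_mul_inv_eq_sub _ _ _ _ hτDunit hMunit (hcore ▸ hQunit), hcore,
    inv_eq_right_inv hτD]
  simp only [Matrix.mul_neg, Matrix.neg_mul, Matrix.smul_mul, Matrix.mul_smul, smul_neg,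
    sub_neg_eq_add, smul_smul, Matrix.mul_assoc, sq]

theorem trace_inv_smul_one_add_mul_sub_proj_mul (hτ : τ ≠ 0) (hE : E * E = D)
    (hB : (1 + τ⁻¹ • D) * B = 1) {X : Matrix ι κ ℝ} (hX : IsUnit (Xᵀ * X).det)
    (hQ : IsUnit (Xᵀ * B * X).det) :
    (τ • 1 + E * (1 - X * (Xᵀ * X)⁻¹ * Xᵀ) * E)⁻¹.trace =
      τ⁻¹ * B.trace + τ⁻¹ ^ 2 * ((Xᵀ * B * X)⁻¹ * (Xᵀ * D * B ^ 2 * X)).trace := by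
  have hEB := commute_of_mul_self_eq_of_one_add_smul_mul_eq_one hE hB
  have hEBBE : E * B * B * E = D * B ^ 2 := by
    rw [Matrix.mul_assoc (E * B) B E, ← hEB.eq, ← Matrix.mul_assoc, Matrix.mul_assoc E B E,
      ← hEB.eq, ← Matrix.mul_assoc, hE, sq, Matrix.mul_assoc]
  rw [inv_smul_one_add_mul_sub_proj_mul hτ hE hB hX hQ, trace_add, trace_smul, trace_smul,
    smul_eq_mul, smul_eq_mul, show B * E * X * (Xᵀ * B * X)⁻¹ * Xᵀ * E * B =
      (B * E * X) * ((Xᵀ * B * X)⁻¹ * Xᵀ * E * B) by simp only [Matrix.mul_assoc], trace_mul_comm,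
    Matrix.mul_assoc Xᵀ D, ← hEBBE]
  simp only [Matrix.mul_assoc]

end Resolvent

end Matrix

theorem T1_final_general
    (n p : ℕ) (τ : ℝ) (hτ : 0 < τ)
    (d : Fin n → ℝ) (hd : ∀ i, 0 ≤ d i)
    (Dplus : Matrix (Fin n) (Fin n) ℝ) (hD : Dplus = Matrix.diagonal d)
    (E : Matrix (Fin n) (Fin n) ℝ) (hE : E = Matrix.diagonal (fun i => Real.sqrt (d i)))
    (B : Matrix (Fin n) (Fin n) ℝ)
    (hB : B = ((1 : Matrix (Fin n) (Fin n) ℝ) + τ⁻¹ • Dplus)⁻¹)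
    (Xt : Matrix (Fin n) (Fin p) ℝ) (hX : IsUnit (Xtᵀ * Xt).det)
    (Gt : Matrix (Fin n) (Fin n) ℝ)
    (hGt : Gt = (1 : Matrix (Fin n) (Fin n) ℝ) - Xt * (Xtᵀ * Xt)⁻¹ * Xtᵀ)
    (Q : ℕ → ℕ → Matrix (Fin p) (Fin p) ℝ)
    (hQ : ∀ i j, Q i j = Xtᵀ * Dplus ^ i * B ^ j * Xt)
    (hQinv : IsUnit (Q 0 1).det)
    (A : Matrix (Fin n) (Fin n) ℝ) (hAdef : A = E * Gt * E)
    (hA : A.PosSemidef) :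
    ∑ i : Fin n, hA.isHermitian.eigenvalues i / (τ + hA.isHermitian.eigenvalues i) =
      τ⁻¹ * ((Dplus * B).trace - ((Q 0 1)⁻¹ * Q 1 2).trace) := by
  have hPB : (1 + τ⁻¹ • Dplus) * B = 1 := by
    have hdet : IsUnit (1 + τ⁻¹ • Dplus).det := by
      rw [hD, ← diagonal_one, ← diagonal_smul, diagonal_add, det_diagonal]
      refine (Finset.prod_pos fun i _ ↦ ?_).ne'.isUnit
      have := hd i
      simp only [Pi.smul_apply, smul_eq_mul]
      positivity
    rw [hB]
    exact mul_nonsing_inv _ hdet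
  have hEE : E * E = Dplus := by
    rw [hE, hD, diagonal_mul_diagonal]
    exact congrArg diagonal (funext fun i ↦ Real.mul_self_sqrt (hd i))
  have hQ01 : Q 0 1 = Xtᵀ * B * Xt := by simp [hQ]
  have hQ12 : Q 1 2 = Xtᵀ * Dplus * B ^ 2 * Xt := by simp [hQ]
  subst hAdef hGt
  rw [hA.sum_eigenvalues_div_add hτ, trace_inv_smul_one_add_mul_sub_proj_mul hτ.ne' hEE hPB hX
    (hQ01 ▸ hQinv), hQ01, hQ12, card_eq_trace_add_inv_mul_trace_mul hPB]
  field_simp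
  ring

/-- Equation (T1-final) of the paper: With the Woodbury setup and
`A = EG̃E` real symmetric positive semidefinite with eigenvalues `μ₁, …, μₙ`,
`Σᵢ μᵢ/(τ + μᵢ) = τ⁻¹[tr(D⁺B(τ)) − tr((Q₀₁(τ))⁻¹Q₁₂(τ))]`. -/
theorem T1_final
    (n p : ℕ) (hp : p < n) (τ : ℝ) (hτ : 0 < τ)
    (d : Fin n → ℝ) (hd : ∀ i, 0 ≤ d i)
    (Dplus : Matrix (Fin n) (Fin n) ℝ) (hD : Dplus = Matrix.diagonal d)
    (E : Matrix (Fin n) (Fin n) ℝ) (hE : E = Matrix.diagonal (fun i => Real.sqrt (d i)))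
    (B : Matrix (Fin n) (Fin n) ℝ)
    (hB : B = ((1 : Matrix (Fin n) (Fin n) ℝ) + τ⁻¹ • Dplus)⁻¹)
    (Xt : Matrix (Fin n) (Fin p) ℝ) (hX : IsUnit (Xtᵀ * Xt).det)
    (Gt : Matrix (Fin n) (Fin n) ℝ)
    (hGt : Gt = (1 : Matrix (Fin n) (Fin n) ℝ) - Xt * (Xtᵀ * Xt)⁻¹ * Xtᵀ)
    (Q : ℕ → ℕ → Matrix (Fin p) (Fin p) ℝ)
    (hQ : ∀ i j, Q i j = Xtᵀ * Dplus ^ i * B ^ j * Xt)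
    (hQinv : IsUnit (Q 0 1).det)
    (A : Matrix (Fin n) (Fin n) ℝ) (hAdef : A = E * Gt * E)
    (hA : A.PosSemidef) :
    ∑ i : Fin n, hA.isHermitian.eigenvalues i / (τ + hA.isHermitian.eigenvalues i) =
      τ⁻¹ * ((Dplus * B).trace - ((Q 0 1)⁻¹ * Q 1 2).trace) :=
  T1_final_general n p τ hτ d hd Dplus hD E hE B hB Xt hX Gt hGt Q hQ hQinv A hAdef hA
end

section
/- (Equation (T2-final) of the paper.) With D⁺, E, B(τ), X̃, G̃, Q_{ij}(τ) as described, assume X̃ᵀX̃ and Q₀₁(τ) are invertible, and let μ₁, …, μₙ be the eigenvalues (with multiplicity) of the real symmetric positive semidefinite matrix A = EG̃E. Then Σ_{i=1}^{n} (μᵢ/(τ + μᵢ))² = τ⁻² { tr((D⁺B(τ))²) + tr(((Q₀₁(τ))⁻¹Q₁₂(τ))²) − 2 tr((Q₀₁(τ))⁻¹Q₂₃(τ)) }. -/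
/-!
The eigenvalues of `A` enter only through its resolvent: by the functional calculus,
`∑ (μᵢ/(τ + μᵢ))² = tr((1 - τ(τ + A)⁻¹)²)`. Writing
`τ + A = (τ + D⁺) - (E X̃)(X̃ᵀX̃)⁻¹(X̃ᵀE)`, the Woodbury identity gives
`(τ + A)⁻¹ = τ⁻¹B + τ⁻² W Q₀₁⁻¹ Wᵀ` with `W = B E X̃`, the capacitance matrix collapsing to `Q₀₁`
because `X̃ᵀX̃ - τ⁻¹ X̃ᵀ E B E X̃ = X̃ᵀ B X̃`. Hence `1 - τ(τ + A)⁻¹ = τ⁻¹(D⁺B - W Q₀₁⁻¹ Wᵀ)`, and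
expanding the square and cycling the trace produces the three terms, since `WᵀW = Q₁₂` and
`Wᵀ D⁺B W = Q₂₃`.
-/

open Matrix

namespace Matrix

variable {n p : Type*} [Fintype n] [DecidableEq n] [Fintype p] [DecidableEq p]

theorem IsHermitian.trace_cfc {𝕜 : Type*} [RCLike 𝕜] {A : Matrix n n 𝕜} (hA : A.IsHermitian)
    (f : ℝ → ℝ) : (cfc f A).trace = ∑ i, (f (hA.eigenvalues i) : 𝕜) := by
  rw [hA.cfc_eq, IsHermitian.cfc, Unitary.conjStarAlgAut_apply, trace_mul_cycle,
    Unitary.coe_star_mul_self, one_mul, trace_diagonal]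
  rfl

theorem IsHermitian.cfc_one_sub_mul_inv_const_add {A : Matrix n n ℝ} (hA : A.IsHermitian)
    {τ : ℝ} (hτ : ∀ x ∈ spectrum ℝ A, τ + x ≠ 0) :
    cfc (fun x => 1 - τ * (τ + x)⁻¹) A = 1 - τ • (τ • 1 + A)⁻¹ := by
  have hA' : IsSelfAdjoint A := hA
  have hc (f : ℝ → ℝ) : ContinuousOn f (spectrum ℝ A) := A.finite_real_spectrum.continuousOn f
  rw [cfc_sub _ _ A (hc _) (hc _), cfc_const_one ℝ A, cfc_const_mul _ _ A (hc _),
    cfc_inv (fun x => τ + x) A hτ (hc _), cfc_const_add τ (fun x => x) A, cfc_id' ℝ A,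
    nonsing_inv_eq_ringInverse, Algebra.algebraMap_eq_smul_one]

theorem PosSemidef.sum_sq_div_add_eigenvalues {A : Matrix n n ℝ} (hA : A.PosSemidef)
    {τ : ℝ} (hτ : 0 < τ) :
    ∑ i, (hA.isHermitian.eigenvalues i / (τ + hA.isHermitian.eigenvalues i)) ^ 2
      = ((1 - τ • (τ • 1 + A)⁻¹) * (1 - τ • (τ • 1 + A)⁻¹)).trace := by
  have hA' : IsSelfAdjoint A := hA.isHermitian
  have hne : ∀ x ∈ spectrum ℝ A, τ + x ≠ 0 := fun x hx => by
    have : 0 ≤ x := (posSemidef_iff_isHermitian_and_spectrum_nonneg.mp hA).2 hx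
    positivity
  have hcfc : cfc (fun x => (x / (τ + x)) ^ 2) A = cfc (fun x => (1 - τ * (τ + x)⁻¹) ^ 2) A :=
    cfc_congr fun x hx => by
      field_simp [hne x hx]
      ring
  rw [← sq, ← hA.isHermitian.cfc_one_sub_mul_inv_const_add hne,
    ← cfc_pow _ 2 A (A.finite_real_spectrum.continuousOn _), ← hcfc, hA.isHermitian.trace_cfc]
  rfl

omit [DecidableEq n] [DecidableEq p] in
theorem trace_mul_self_sub_mul_mul {R : Type*} [CommRing R] (M : Matrix n n R)
    (W : Matrix n p R) (C : Matrix p p R) (V : Matrix p n R) :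
    ((M - W * C * V) * (M - W * C * V)).trace
      = (M * M).trace + ((C * (V * W)) * (C * (V * W))).trace
        - 2 * (C * (V * M * W)).trace := by
  have hMK : (M * (W * C * V)).trace = (C * (V * M * W)).trace := by
    rw [show M * (W * C * V) = (M * W) * (C * V) by simp only [Matrix.mul_assoc],
      trace_mul_comm]
    simp only [Matrix.mul_assoc]
  have hKM : (W * C * V * M).trace = (C * (V * M * W)).trace := by
    rw [trace_mul_comm, hMK]
  have hKK : (W * C * V * (W * C * V)).trace = ((C * (V * W)) * (C * (V * W))).trace := by
    rw [show W * C * V * (W * C * V) = W * (C * (V * W) * C * V) by simp only [Matrix.mul_assoc],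
      trace_mul_comm]
    simp only [Matrix.mul_assoc]
  rw [Matrix.sub_mul, Matrix.mul_sub, Matrix.mul_sub, trace_sub, trace_sub, trace_sub,
    hMK, hKM, hKK]
  ring

theorem inv_diagonal_of_ne_zero {K : Type*} [Field K] {v : n → K} (hv : ∀ i, v i ≠ 0) :
    (diagonal v)⁻¹ = diagonal fun i => (v i)⁻¹ := by
  refine inv_eq_left_inv ?_
  rw [diagonal_mul_diagonal, ← diagonal_one]
  exact congrArg diagonal (funext fun i => inv_mul_cancel₀ (hv i))

theorem inv_one_add_inv_smul_diagonal {K : Type*} [Field K] {τ : K} (hτ : τ ≠ 0) {d : n → K}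
    (hd : ∀ i, τ + d i ≠ 0) :
    (1 + τ⁻¹ • diagonal d)⁻¹ = diagonal fun i => τ / (τ + d i) := by
  have : (1 : Matrix n n K) + τ⁻¹ • diagonal d = diagonal fun i => τ⁻¹ * (τ + d i) := by
    rw [← diagonal_one, ← diagonal_smul, diagonal_add]
    congr 1
    funext i
    simp [mul_add, inv_mul_cancel₀ hτ]
  rw [this, inv_diagonal_of_ne_zero fun i => mul_ne_zero (inv_ne_zero hτ) (hd i)]
  congr 1
  funext i
  rw [mul_inv, inv_inv, div_eq_mul_inv]

omit [Fintype p] [DecidableEq p] in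
theorem transpose_diagonal_mul_mul_diagonal_mul {R : Type*} [CommSemiring R] {b d e : n → R}
    (he : ∀ i, e i * e i = d i) (z : n → R) (X : Matrix n p R) :
    (diagonal (b * e) * X)ᵀ * diagonal z * (diagonal (b * e) * X)
      = Xᵀ * diagonal (d * b ^ 2 * z) * X := by
  have hdiag : diagonal (b * e) * diagonal z * diagonal (b * e) = diagonal (d * b ^ 2 * z) := by
    rw [diagonal_mul_diagonal, diagonal_mul_diagonal]
    refine congrArg diagonal (funext fun i => ?_)
    simp only [Pi.mul_apply, Pi.pow_apply, ← he]
    ring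
  rw [transpose_mul, diagonal_transpose, ← hdiag]
  simp only [Matrix.mul_assoc]

section Woodbury

variable {K : Type*} [Field K] {τ : K} {b d e : n → K} {X : Matrix n p K}

theorem inv_smul_one_add_diagonal_mul_mul_diagonal (hτ : τ ≠ 0) (hb : ∀ i, (τ + d i) * b i = τ)
    (he : ∀ i, e i * e i = d i) (hX : IsUnit (Xᵀ * X).det)
    (hQ : IsUnit (Xᵀ * diagonal b * X).det) :
    (τ • 1 + diagonal e * (1 - X * (Xᵀ * X)⁻¹ * Xᵀ) * diagonal e)⁻¹
      = τ⁻¹ • diagonal b + (τ ^ 2)⁻¹ •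
          (diagonal (b * e) * X * (Xᵀ * diagonal b * X)⁻¹ * (diagonal (b * e) * X)ᵀ) := by
  have hd (i : n) : τ + d i ≠ 0 := fun h => hτ (by rw [← hb i, h, zero_mul])
  have hsplit : τ • 1 + diagonal e * (1 - X * (Xᵀ * X)⁻¹ * Xᵀ) * diagonal e
      = diagonal (fun i => τ + d i) + (-(diagonal e * X)) * (Xᵀ * X)⁻¹ * (Xᵀ * diagonal e) := by
    rw [← diagonal_add, ← smul_one_eq_diagonal, mul_sub, mul_one, sub_mul, diagonal_mul_diagonal,
      funext he]
    simp only [Matrix.neg_mul, Matrix.mul_assoc]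
    abel
  have hA₀ : (diagonal fun i => τ + d i)⁻¹ = τ⁻¹ • diagonal b := by
    rw [inv_diagonal_of_ne_zero hd, ← diagonal_smul]
    congr 1
    funext i
    rw [Pi.smul_apply, smul_eq_mul]
    exact inv_eq_of_mul_eq_one_left (by rw [mul_assoc, mul_comm (b i), hb i, inv_mul_cancel₀ hτ])
  have hbe : diagonal b = 1 - diagonal e * (τ⁻¹ • diagonal b) * diagonal e := by
    rw [← diagonal_smul, diagonal_mul_diagonal, diagonal_mul_diagonal, ← diagonal_one,
      diagonal_sub]
    congr 1
    funext i
    simp only [Pi.smul_apply, smul_eq_mul, mul_comm _ (e i), ← mul_assoc, he]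
    field_simp
    linear_combination hb i
  have hcore :
      ((Xᵀ * X)⁻¹)⁻¹ + Xᵀ * diagonal e * (diagonal fun i => τ + d i)⁻¹ * -(diagonal e * X)
        = Xᵀ * diagonal b * X := by
    rw [nonsing_inv_nonsing_inv _ hX, hA₀]
    conv_rhs => rw [hbe]
    simp only [Matrix.mul_sub, Matrix.sub_mul, Matrix.mul_one, Matrix.mul_neg, Matrix.mul_assoc]
    abel
  have hA₀_unit : IsUnit (diagonal fun i => τ + d i) :=
    isUnit_diagonal.mpr (Pi.isUnit_iff.mpr fun i => (hd i).isUnit)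
  have hS_unit : IsUnit (Xᵀ * X)⁻¹ :=
    isUnit_nonsing_inv_iff.mpr ((isUnit_iff_isUnit_det _).mpr hX)
  have hQ_unit : IsUnit (Xᵀ * diagonal b * X) := (isUnit_iff_isUnit_det _).mpr hQ
  rw [hsplit, add_mul_mul_inv_eq_sub _ _ _ _ hA₀_unit hS_unit (hcore ▸ hQ_unit), hcore, hA₀,
    transpose_mul, diagonal_transpose, Pi.mul_def, ← diagonal_mul_diagonal b e]
  simp only [smul_mul_assoc, mul_smul_comm, Matrix.mul_neg, Matrix.neg_mul, smul_neg, smul_smul,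
    sub_neg_eq_add, Matrix.mul_assoc, sq, mul_inv]
  rw [show diagonal e * diagonal b = diagonal b * diagonal e by
    simp only [diagonal_mul_diagonal, mul_comm]]

theorem one_sub_smul_inv_smul_one_add_diagonal_mul_mul_diagonal (hτ : τ ≠ 0)
    (hb : ∀ i, (τ + d i) * b i = τ) (he : ∀ i, e i * e i = d i) (hX : IsUnit (Xᵀ * X).det)
    (hQ : IsUnit (Xᵀ * diagonal b * X).det) :
    1 - τ • (τ • 1 + diagonal e * (1 - X * (Xᵀ * X)⁻¹ * Xᵀ) * diagonal e)⁻¹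
      = τ⁻¹ • (diagonal d * diagonal b
        - diagonal (b * e) * X * (Xᵀ * diagonal b * X)⁻¹ * (diagonal (b * e) * X)ᵀ) := by
  have hdb : 1 - diagonal b = τ⁻¹ • (diagonal d * diagonal b) := by
    rw [diagonal_mul_diagonal, ← diagonal_smul, ← diagonal_one, diagonal_sub]
    congr 1
    funext i
    rw [Pi.smul_apply, smul_eq_mul, eq_inv_mul_iff_mul_eq₀ hτ]
    linear_combination -(hb i)
  rw [inv_smul_one_add_diagonal_mul_mul_diagonal hτ hb he hX hQ, smul_add, smul_smul,
    mul_inv_cancel₀ hτ, one_smul, smul_smul, sq, mul_inv, ← mul_assoc, mul_inv_cancel₀ hτ,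
    one_mul, ← sub_sub, hdb, smul_sub]

end Woodbury

end Matrix

theorem T2_final_general
    (n p : ℕ) (τ : ℝ) (hτ : 0 < τ)
    (d : Fin n → ℝ) (hd : ∀ i, 0 ≤ d i)
    (Dplus : Matrix (Fin n) (Fin n) ℝ) (hD : Dplus = Matrix.diagonal d)
    (E : Matrix (Fin n) (Fin n) ℝ) (hE : E = Matrix.diagonal (fun i => Real.sqrt (d i)))
    (B : Matrix (Fin n) (Fin n) ℝ)
    (hB : B = ((1 : Matrix (Fin n) (Fin n) ℝ) + τ⁻¹ • Dplus)⁻¹)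
    (Xt : Matrix (Fin n) (Fin p) ℝ) (hX : IsUnit (Xtᵀ * Xt).det)
    (Gt : Matrix (Fin n) (Fin n) ℝ)
    (hGt : Gt = (1 : Matrix (Fin n) (Fin n) ℝ) - Xt * (Xtᵀ * Xt)⁻¹ * Xtᵀ)
    (Q : ℕ → ℕ → Matrix (Fin p) (Fin p) ℝ)
    (hQ : ∀ i j, Q i j = Xtᵀ * Dplus ^ i * B ^ j * Xt)
    (hQinv : IsUnit (Q 0 1).det)
    (A : Matrix (Fin n) (Fin n) ℝ) (hAdef : A = E * Gt * E)
    (hA : A.PosSemidef) :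
    ∑ i : Fin n, (hA.isHermitian.eigenvalues i / (τ + hA.isHermitian.eigenvalues i)) ^ 2 =
      (τ ^ 2)⁻¹ * (((Dplus * B) * (Dplus * B)).trace
        + (((Q 0 1)⁻¹ * Q 1 2) * ((Q 0 1)⁻¹ * Q 1 2)).trace
        - 2 * ((Q 0 1)⁻¹ * Q 2 3).trace) := by
  subst hD hE hGt hAdef
  have hτd : ∀ i, τ + d i ≠ 0 := fun i => (add_pos_of_pos_of_nonneg hτ (hd i)).ne'
  obtain rfl : B = diagonal fun i => τ / (τ + d i) :=
    hB.trans (inv_one_add_inv_smul_diagonal hτ.ne' hτd)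
  set b : Fin n → ℝ := fun i => τ / (τ + d i)
  have hb (i : Fin n) : (τ + d i) * b i = τ := mul_div_cancel₀ τ (hτd i)
  set W := diagonal (b * fun i => √(d i)) * Xt
  have he (i : Fin n) : √(d i) * √(d i) = d i := Real.mul_self_sqrt (hd i)
  have hQ' (i j : ℕ) : Q i j = Xtᵀ * diagonal (d ^ i * b ^ j) * Xt := by
    rw [hQ, diagonal_pow, diagonal_pow, Matrix.mul_assoc Xtᵀ, diagonal_mul_diagonal]
    rfl
  have hQ01 : Q 0 1 = Xtᵀ * diagonal b * Xt := by simp [hQ']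
  have hQ12 : Q 1 2 = Wᵀ * W := by
    rw [hQ', pow_one, ← mul_one (d * b ^ 2), ← transpose_diagonal_mul_mul_diagonal_mul he,
      Pi.one_def, diagonal_one, Matrix.mul_one]
  have hQ23 : Q 2 3 = Wᵀ * (diagonal d * diagonal b) * W := by
    rw [diagonal_mul_diagonal, transpose_diagonal_mul_mul_diagonal_mul he, hQ']
    refine congrArg (fun v => Xtᵀ * diagonal v * Xt) (funext fun i => ?_)
    simp only [Pi.mul_apply, Pi.pow_apply]
    ring
  rw [hA.sum_sq_div_add_eigenvalues hτ,
    one_sub_smul_inv_smul_one_add_diagonal_mul_mul_diagonal hτ.ne' hb he hX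
      (hQ01 ▸ hQinv),
    ← hQ01, smul_mul_smul_comm, trace_smul, trace_mul_self_sub_mul_mul, ← hQ12, ← hQ23,
    smul_eq_mul, sq, mul_inv]

/-- Equation (T2-final) of the paper: With the Woodbury setup and
`A = EG̃E` real symmetric positive semidefinite with eigenvalues `μ₁, …, μₙ`,
`Σᵢ (μᵢ/(τ + μᵢ))² = τ⁻²{tr((D⁺B(τ))²) + tr(((Q₀₁(τ))⁻¹Q₁₂(τ))²) − 2tr((Q₀₁(τ))⁻¹Q₂₃(τ))}`. -/
theorem T2_final
    (n p : ℕ) (hp : p < n) (τ : ℝ) (hτ : 0 < τ)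
    (d : Fin n → ℝ) (hd : ∀ i, 0 ≤ d i)
    (Dplus : Matrix (Fin n) (Fin n) ℝ) (hD : Dplus = Matrix.diagonal d)
    (E : Matrix (Fin n) (Fin n) ℝ) (hE : E = Matrix.diagonal (fun i => Real.sqrt (d i)))
    (B : Matrix (Fin n) (Fin n) ℝ)
    (hB : B = ((1 : Matrix (Fin n) (Fin n) ℝ) + τ⁻¹ • Dplus)⁻¹)
    (Xt : Matrix (Fin n) (Fin p) ℝ) (hX : IsUnit (Xtᵀ * Xt).det)
    (Gt : Matrix (Fin n) (Fin n) ℝ)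
    (hGt : Gt = (1 : Matrix (Fin n) (Fin n) ℝ) - Xt * (Xtᵀ * Xt)⁻¹ * Xtᵀ)
    (Q : ℕ → ℕ → Matrix (Fin p) (Fin p) ℝ)
    (hQ : ∀ i j, Q i j = Xtᵀ * Dplus ^ i * B ^ j * Xt)
    (hQinv : IsUnit (Q 0 1).det)
    (A : Matrix (Fin n) (Fin n) ℝ) (hAdef : A = E * Gt * E)
    (hA : A.PosSemidef) :
    ∑ i : Fin n, (hA.isHermitian.eigenvalues i / (τ + hA.isHermitian.eigenvalues i)) ^ 2 =
      (τ ^ 2)⁻¹ * (((Dplus * B) * (Dplus * B)).trace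
        + (((Q 0 1)⁻¹ * Q 1 2) * ((Q 0 1)⁻¹ * Q 1 2)).trace
        - 2 * ((Q 0 1)⁻¹ * Q 2 3).trace) :=
  T2_final_general n p τ hτ d hd Dplus hD E hE B hB Xt hX Gt hGt Q hQ hQinv A hAdef hA
end

section
/- (Substance of Theorem 2: equivalence of the two reference priors.) With D⁺, E, B(τ), X̃, G̃, Q_{ij}(τ) as described, assume X̃ᵀX̃ and Q₀₁(τ) are invertible, and let μ₁, …, μₙ be the eigenvalues (with multiplicity) of the real symmetric positive semidefinite matrix A = EG̃E. Then Σ_{i=1}^{n} (μᵢ/(τ + μᵢ))² − (n−p)⁻¹ ( Σ_{i=1}^{n} μᵢ/(τ + μᵢ) )² = τ⁻² { tr((D⁺B(τ))²) + tr(((Q₀₁(τ))⁻¹Q₁₂(τ))²) − 2 tr((Q₀₁(τ))⁻¹Q₂₃(τ)) − (n−p)⁻¹ [ tr((Q₀₁(τ))⁻¹Q₁₂(τ)) − tr(D⁺B(τ)) ]² }. -/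
open Matrix

private lemma prEq_conj_trace {n : ℕ} (V : Matrix (Fin n) (Fin n) ℝ) (hV : star V * V = 1)
    (f : Fin n → ℝ) : (V * Matrix.diagonal f * star V).trace = ∑ i, f i := by
  rw [Matrix.trace_mul_comm, ← Matrix.mul_assoc, hV, Matrix.one_mul, Matrix.trace_diagonal]

private lemma prEq_conj_mul {n : ℕ} (V : Matrix (Fin n) (Fin n) ℝ) (hV : star V * V = 1)
    (f g : Fin n → ℝ) :
    (V * Matrix.diagonal f * star V) * (V * Matrix.diagonal g * star V)
      = V * Matrix.diagonal (fun i => f i * g i) * star V := by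
  have h : star V * (V * (Matrix.diagonal g * star V)) = Matrix.diagonal g * star V := by
    rw [← Matrix.mul_assoc, hV, Matrix.one_mul]
  simp only [Matrix.mul_assoc, h, ← Matrix.diagonal_mul_diagonal]

/-- substance of Theorem 2: equivalence of the two reference priors: With the Woodbury setup and
`A = EG̃E` real symmetric positive semidefinite with eigenvalues `μ₁, …, μₙ`,
the quantity `Σᵢ (μᵢ/(τ+μᵢ))² − (n−p)⁻¹(Σᵢ μᵢ/(τ+μᵢ))²` appearing in the KFF prior
equals the trace expression of the novel reference prior. -/
theorem prior_equivalence
    (n p : ℕ) (hp : p < n) (τ : ℝ) (hτ : 0 < τ)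
    (d : Fin n → ℝ) (hd : ∀ i, 0 ≤ d i)
    (Dplus : Matrix (Fin n) (Fin n) ℝ) (hD : Dplus = Matrix.diagonal d)
    (E : Matrix (Fin n) (Fin n) ℝ) (hE : E = Matrix.diagonal (fun i => Real.sqrt (d i)))
    (B : Matrix (Fin n) (Fin n) ℝ)
    (hB : B = ((1 : Matrix (Fin n) (Fin n) ℝ) + τ⁻¹ • Dplus)⁻¹)
    (Xt : Matrix (Fin n) (Fin p) ℝ) (hX : IsUnit (Xtᵀ * Xt).det)
    (Gt : Matrix (Fin n) (Fin n) ℝ)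
    (hGt : Gt = (1 : Matrix (Fin n) (Fin n) ℝ) - Xt * (Xtᵀ * Xt)⁻¹ * Xtᵀ)
    (Q : ℕ → ℕ → Matrix (Fin p) (Fin p) ℝ)
    (hQ : ∀ i j, Q i j = Xtᵀ * Dplus ^ i * B ^ j * Xt)
    (hQinv : IsUnit (Q 0 1).det)
    (A : Matrix (Fin n) (Fin n) ℝ) (hAdef : A = E * Gt * E)
    (hA : A.PosSemidef) :
    ∑ i : Fin n, (hA.isHermitian.eigenvalues i / (τ + hA.isHermitian.eigenvalues i)) ^ 2
      - ((n : ℝ) - p)⁻¹ *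
        (∑ i : Fin n, hA.isHermitian.eigenvalues i / (τ + hA.isHermitian.eigenvalues i)) ^ 2 =
      (τ ^ 2)⁻¹ * (((Dplus * B) * (Dplus * B)).trace
        + (((Q 0 1)⁻¹ * Q 1 2) * ((Q 0 1)⁻¹ * Q 1 2)).trace
        - 2 * ((Q 0 1)⁻¹ * Q 2 3).trace
        - ((n : ℝ) - p)⁻¹ * (((Q 0 1)⁻¹ * Q 1 2).trace - (Dplus * B).trace) ^ 2) := by
  classical
  have hτ0 : τ ≠ 0 := ne_of_gt hτ
  have hττ : τ * τ⁻¹ = 1 := mul_inv_cancel₀ hτ0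
  -- scalar diagonal data
  set b : Fin n → ℝ := fun i => (1 + τ⁻¹ * d i)⁻¹ with hbdef
  have hb0 : ∀ i, (1 + τ⁻¹ * d i) ≠ 0 := by
    intro i; have := hd i; positivity
  have hbmul : ∀ i, (1 + τ⁻¹ * d i) * b i = 1 := fun i => mul_inv_cancel₀ (hb0 i)
  have hdd : ∀ i, Real.sqrt (d i) * Real.sqrt (d i) = d i := fun i => Real.mul_self_sqrt (hd i)
  have hs1 : ∀ i, 1 - b i = τ⁻¹ * (d i * b i) := by
    intro i
    have h := hbmul i
    linear_combination -h
  -- matrix diagonal forms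
  have hBd : B = Matrix.diagonal b := by
    rw [hB, hD]
    apply Matrix.inv_eq_right_inv
    have h1 : (1 : Matrix (Fin n) (Fin n) ℝ) + τ⁻¹ • Matrix.diagonal d
        = Matrix.diagonal (fun i => 1 + τ⁻¹ * d i) := by
      rw [← Matrix.diagonal_one, ← Matrix.diagonal_smul, Matrix.diagonal_add]
      rfl
    rw [h1, Matrix.diagonal_mul_diagonal, ← Matrix.diagonal_one]
    exact congrArg Matrix.diagonal (funext fun i => hbmul i)
  have hKd : (1 : Matrix (Fin n) (Fin n) ℝ) - B = Matrix.diagonal (fun i => τ⁻¹ * (d i * b i)) := by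
    rw [hBd, ← Matrix.diagonal_one, Matrix.diagonal_sub]
    exact congrArg Matrix.diagonal (funext fun i => hs1 i)
  -- sandwich identities with arbitrary tail
  have hBZ : ∀ {m : ℕ} (Z : Matrix (Fin n) (Fin m) ℝ),
      (τ • (1 : Matrix (Fin n) (Fin n) ℝ) + Dplus) * (B * Z) = τ • Z := by
    intro m Z
    have core : (τ • (1 : Matrix (Fin n) (Fin n) ℝ) + Dplus) * B
        = τ • (1 : Matrix (Fin n) (Fin n) ℝ) := by
      rw [hD, hBd, ← Matrix.diagonal_one, ← Matrix.diagonal_smul, Matrix.diagonal_add,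
        Matrix.diagonal_mul_diagonal]
      refine congrArg Matrix.diagonal (funext fun i => ?_)
      simp only [Pi.smul_apply, smul_eq_mul, mul_one]
      linear_combination τ * hbmul i - (d i * b i) * hττ
    calc (τ • (1 : Matrix (Fin n) (Fin n) ℝ) + Dplus) * (B * Z)
        = ((τ • (1 : Matrix (Fin n) (Fin n) ℝ) + Dplus) * B) * Z := by
          rw [Matrix.mul_assoc]
      _ = τ • Z := by rw [core, Matrix.smul_mul, Matrix.one_mul]
  have hEBE : ∀ {m : ℕ} (Z : Matrix (Fin n) (Fin m) ℝ),
      E * (B * (E * Z)) = Dplus * (B * Z) := by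
    intro m Z
    have core : E * (B * E) = Dplus * B := by
      rw [hE, hBd, hD]
      simp only [Matrix.diagonal_mul_diagonal]
      refine congrArg Matrix.diagonal (funext fun i => ?_)
      linear_combination (b i) * hdd i
    calc E * (B * (E * Z)) = (E * (B * E)) * Z := by simp only [Matrix.mul_assoc]
      _ = Dplus * (B * Z) := by rw [core, Matrix.mul_assoc]
  have hEBBE : ∀ {m : ℕ} (Z : Matrix (Fin n) (Fin m) ℝ),
      E * (B * (B * (E * Z))) = Dplus * (B * (B * Z)) := by
    intro m Z
    have core : E * (B * (B * E)) = Dplus * (B * B) := by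
      rw [hE, hBd, hD]
      simp only [Matrix.diagonal_mul_diagonal]
      refine congrArg Matrix.diagonal (funext fun i => ?_)
      linear_combination (b i * b i) * hdd i
    calc E * (B * (B * (E * Z))) = (E * (B * (B * E))) * Z := by simp only [Matrix.mul_assoc]
      _ = Dplus * (B * (B * Z)) := by rw [core]; simp only [Matrix.mul_assoc]
  have hEBKBE : ∀ {m : ℕ} (Z : Matrix (Fin n) (Fin m) ℝ),
      E * (B * (((1 : Matrix (Fin n) (Fin n) ℝ) - B) * (B * (E * Z))))
        = τ⁻¹ • (Dplus * (Dplus * (B * (B * (B * Z))))) := by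
    intro m Z
    have core : E * (B * (((1 : Matrix (Fin n) (Fin n) ℝ) - B) * (B * E)))
        = τ⁻¹ • (Dplus * (Dplus * (B * (B * B)))) := by
      rw [hE, hKd, hBd, hD]
      simp only [Matrix.diagonal_mul_diagonal, ← Matrix.diagonal_smul]
      refine congrArg Matrix.diagonal (funext fun i => ?_)
      simp only [Pi.smul_apply, smul_eq_mul]
      linear_combination (τ⁻¹ * d i * b i * b i * b i) * hdd i
    calc E * (B * (((1 : Matrix (Fin n) (Fin n) ℝ) - B) * (B * (E * Z))))
        = (E * (B * (((1 : Matrix (Fin n) (Fin n) ℝ) - B) * (B * E)))) * Z := by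
          simp only [Matrix.mul_assoc]
      _ = τ⁻¹ • (Dplus * (Dplus * (B * (B * (B * Z))))) := by
          rw [core, Matrix.smul_mul]; simp only [Matrix.mul_assoc]
  -- right-associated forms of the Q matrices
  have hQ01 : Q 0 1 = Xtᵀ * (B * Xt) := by
    rw [hQ 0 1, pow_zero, pow_one, Matrix.mul_one, Matrix.mul_assoc]
  have hQ11 : Q 1 1 = Xtᵀ * (Dplus * (B * Xt)) := by
    rw [hQ 1 1, pow_one, pow_one]; simp only [Matrix.mul_assoc]
  have hQ12 : Q 1 2 = Xtᵀ * (Dplus * (B * (B * Xt))) := by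
    rw [hQ 1 2, pow_one, pow_two]; simp only [Matrix.mul_assoc]
  have hQ23 : Q 2 3 = Xtᵀ * (Dplus * (Dplus * (B * (B * (B * Xt))))) := by
    rw [hQ 2 3, pow_two, show (3 : ℕ) = 2 + 1 by norm_num, pow_succ, pow_two]
    simp only [Matrix.mul_assoc]
  -- notation
  set C : Matrix (Fin p) (Fin p) ℝ := (Xtᵀ * Xt)⁻¹ with hCdef
  set Qi : Matrix (Fin p) (Fin p) ℝ := (Q 0 1)⁻¹ with hQidef
  set R : Matrix (Fin n) (Fin n) ℝ := B * (E * (Xt * (Qi * (Xtᵀ * (E * B))))) with hRdef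
  set N : Matrix (Fin n) (Fin n) ℝ := τ⁻¹ • B + (τ⁻¹ * τ⁻¹) • R with hNdef
  set S : Matrix (Fin n) (Fin n) ℝ := τ • (1 : Matrix (Fin n) (Fin n) ℝ) + A with hSdef
  -- key algebra : S * N = 1
  have hQQi : Q 0 1 * Qi = 1 := Matrix.mul_nonsing_inv _ hQinv
  have hCXX : C * (Xtᵀ * Xt) = 1 := Matrix.nonsing_inv_mul _ hX
  have hBDB1 : B + τ⁻¹ • (Dplus * B) = 1 := by
    rw [hBd, hD, Matrix.diagonal_mul_diagonal, ← Matrix.diagonal_smul, Matrix.diagonal_add,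
      ← Matrix.diagonal_one]
    refine congrArg Matrix.diagonal (funext fun i => ?_)
    simp only [Pi.smul_apply, smul_eq_mul]
    linear_combination hbmul i
  have hsumQ : Q 0 1 + τ⁻¹ • Q 1 1 = Xtᵀ * Xt := by
    rw [hQ01, hQ11, ← Matrix.mul_smul, ← Matrix.mul_add]
    congr 1
    calc B * Xt + τ⁻¹ • (Dplus * (B * Xt)) = (B + τ⁻¹ • (Dplus * B)) * Xt := by
          simp only [Matrix.add_mul, Matrix.smul_mul, Matrix.mul_assoc]
      _ = Xt := by rw [hBDB1, Matrix.one_mul]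
  have hW0 : τ⁻¹ • Qi - τ⁻¹ • C - (τ⁻¹ * τ⁻¹) • (C * (Q 1 1 * Qi)) = 0 := by
    have h2 : τ⁻¹ • C = (τ⁻¹ • (C * Q 0 1)) * Qi := by
      rw [Matrix.smul_mul, Matrix.mul_assoc, hQQi, Matrix.mul_one]
    have h3 : (τ⁻¹ * τ⁻¹) • (C * (Q 1 1 * Qi)) = ((τ⁻¹ * τ⁻¹) • (C * Q 1 1)) * Qi := by
      rw [Matrix.smul_mul, Matrix.mul_assoc]
    have h1 : τ⁻¹ • Qi = (τ⁻¹ • (1 : Matrix (Fin p) (Fin p) ℝ)) * Qi := by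
      rw [Matrix.smul_mul, Matrix.one_mul]
    rw [h1, h2, h3, ← Matrix.sub_mul, ← Matrix.sub_mul]
    have hz : τ⁻¹ • (1 : Matrix (Fin p) (Fin p) ℝ) - τ⁻¹ • (C * Q 0 1)
        - (τ⁻¹ * τ⁻¹) • (C * Q 1 1) = τ⁻¹ • ((1 : Matrix (Fin p) (Fin p) ℝ)
          - C * (Q 0 1 + τ⁻¹ • Q 1 1)) := by
      rw [Matrix.mul_add, Matrix.mul_smul]
      module
    rw [hz, hsumQ, hCXX, sub_self, smul_zero, Matrix.zero_mul]
  have hAexp : A = Dplus - E * (Xt * (C * (Xtᵀ * E))) := by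
    rw [hAdef, hGt, Matrix.mul_sub, Matrix.sub_mul, Matrix.mul_one]
    congr 1
    · rw [hE, hD, Matrix.diagonal_mul_diagonal]
      exact congrArg Matrix.diagonal (funext fun i => hdd i)
    · simp only [Matrix.mul_assoc]
  have hQ11mid : Xtᵀ * (E * (B * (E * Xt))) = Q 1 1 := by
    rw [hEBE, hQ11]
  have hSN : S * N = 1 := by
    have hS' : S = (τ • (1 : Matrix (Fin n) (Fin n) ℝ) + Dplus) - E * (Xt * (C * (Xtᵀ * E))) := by
      rw [hSdef, hAexp]; abel
    rw [hS', Matrix.sub_mul, hNdef, Matrix.mul_add, Matrix.mul_add]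
    have t1 : (τ • (1 : Matrix (Fin n) (Fin n) ℝ) + Dplus) * (τ⁻¹ • B) = 1 := by
      rw [Matrix.mul_smul, show B = B * (1 : Matrix (Fin n) (Fin n) ℝ) by rw [Matrix.mul_one],
        hBZ, smul_smul, inv_mul_cancel₀ hτ0, one_smul]
    have t2 : (τ • (1 : Matrix (Fin n) (Fin n) ℝ) + Dplus) * ((τ⁻¹ * τ⁻¹) • R)
        = τ⁻¹ • (E * (Xt * (Qi * (Xtᵀ * (E * B))))) := by
      rw [Matrix.mul_smul, hRdef, hBZ, smul_smul,
        show τ⁻¹ * τ⁻¹ * τ = τ⁻¹ by field_simp]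
    have t3 : (E * (Xt * (C * (Xtᵀ * E)))) * (τ⁻¹ • B)
        = E * (Xt * ((τ⁻¹ • C) * (Xtᵀ * (E * B)))) := by
      rw [Matrix.mul_smul]
      simp only [Matrix.smul_mul, Matrix.mul_smul, Matrix.mul_assoc]
    have t4 : (E * (Xt * (C * (Xtᵀ * E)))) * ((τ⁻¹ * τ⁻¹) • R)
        = E * (Xt * (((τ⁻¹ * τ⁻¹) • (C * (Q 1 1 * Qi))) * (Xtᵀ * (E * B)))) := by
      rw [Matrix.mul_smul, hRdef]
      rw [show (E * (Xt * (C * (Xtᵀ * E)))) * (B * (E * (Xt * (Qi * (Xtᵀ * (E * B))))))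
          = E * (Xt * (C * ((Xtᵀ * (E * (B * (E * Xt)))) * (Qi * (Xtᵀ * (E * B)))))) by
        simp only [Matrix.mul_assoc]]
      rw [hQ11mid]
      simp only [Matrix.smul_mul, Matrix.mul_smul, Matrix.mul_assoc]
    rw [t1, t2, t3, t4]
    have t5 : τ⁻¹ • (E * (Xt * (Qi * (Xtᵀ * (E * B)))))
        = E * (Xt * ((τ⁻¹ • Qi) * (Xtᵀ * (E * B)))) := by
      simp only [Matrix.smul_mul, Matrix.mul_smul, Matrix.mul_assoc]
    rw [t5]
    have t6 : E * (Xt * ((τ⁻¹ • Qi) * (Xtᵀ * (E * B))))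
        - E * (Xt * ((τ⁻¹ • C) * (Xtᵀ * (E * B))))
        - E * (Xt * (((τ⁻¹ * τ⁻¹) • (C * (Q 1 1 * Qi))) * (Xtᵀ * (E * B)))) = 0 := by
      calc E * (Xt * ((τ⁻¹ • Qi) * (Xtᵀ * (E * B))))
          - E * (Xt * ((τ⁻¹ • C) * (Xtᵀ * (E * B))))
          - E * (Xt * (((τ⁻¹ * τ⁻¹) • (C * (Q 1 1 * Qi))) * (Xtᵀ * (E * B))))
          = E * (Xt * ((τ⁻¹ • Qi - τ⁻¹ • C - (τ⁻¹ * τ⁻¹) • (C * (Q 1 1 * Qi)))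
              * (Xtᵀ * (E * B)))) := by
            simp only [Matrix.sub_mul, Matrix.mul_sub]
        _ = 0 := by rw [hW0, Matrix.zero_mul, Matrix.mul_zero, Matrix.mul_zero]
    calc 1 + E * (Xt * ((τ⁻¹ • Qi) * (Xtᵀ * (E * B))))
        - (E * (Xt * ((τ⁻¹ • C) * (Xtᵀ * (E * B))))
          + E * (Xt * (((τ⁻¹ * τ⁻¹) • (C * (Q 1 1 * Qi))) * (Xtᵀ * (E * B)))))
        = 1 + (E * (Xt * ((τ⁻¹ • Qi) * (Xtᵀ * (E * B))))
          - E * (Xt * ((τ⁻¹ • C) * (Xtᵀ * (E * B))))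
          - E * (Xt * (((τ⁻¹ * τ⁻¹) • (C * (Q 1 1 * Qi))) * (Xtᵀ * (E * B))))) := by abel
      _ = 1 := by rw [t6, add_zero]
  -- spectral side
  set μ : Fin n → ℝ := hA.isHermitian.eigenvalues with hμdef
  set V : Matrix (Fin n) (Fin n) ℝ :=
    (hA.isHermitian.eigenvectorUnitary : Matrix (Fin n) (Fin n) ℝ) with hVdef
  have hVsV : star V * V = 1 :=
    Matrix.mem_unitaryGroup_iff'.mp (hA.isHermitian.eigenvectorUnitary).2
  have hVVs : V * star V = 1 :=
    Matrix.mem_unitaryGroup_iff.mp (hA.isHermitian.eigenvectorUnitary).2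
  have hAspec : A = V * Matrix.diagonal μ * star V := by
    have h := hA.isHermitian.spectral_theorem
    simpa using h
  have hμ0 : ∀ i, 0 ≤ μ i := fun i => hA.eigenvalues_nonneg i
  have hτμ : ∀ i, τ + μ i ≠ 0 := fun i => by have := hμ0 i; positivity
  set M : Matrix (Fin n) (Fin n) ℝ :=
    V * Matrix.diagonal (fun i => μ i / (τ + μ i)) * star V with hMdef
  have hdiagsum : Matrix.diagonal (fun i : Fin n => τ + μ i)
      = τ • (1 : Matrix (Fin n) (Fin n) ℝ) + Matrix.diagonal μ := by
    rw [← Matrix.diagonal_one, ← Matrix.diagonal_smul, Matrix.diagonal_add]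
    refine congrArg Matrix.diagonal (funext fun i => ?_)
    simp
  have hSspec : V * Matrix.diagonal (fun i => τ + μ i) * star V = S := by
    rw [hdiagsum, Matrix.mul_add, Matrix.add_mul, hSdef]
    congr 1
    · rw [Matrix.mul_smul, Matrix.mul_one, Matrix.smul_mul, hVVs]
    · exact hAspec.symm
  have hMS : M * S = A := by
    rw [← hSspec, hMdef, prEq_conj_mul V hVsV, hAspec]
    congr 1
    refine congrArg (fun z => V * z) (congrArg Matrix.diagonal (funext fun i => ?_))
    exact div_mul_cancel₀ _ (hτμ i)
  have hMN : M = 1 - τ • N := by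
    have h1 : M = A * N := by
      calc M = M * (S * N) := by rw [hSN, Matrix.mul_one]
        _ = (M * S) * N := (Matrix.mul_assoc M S N).symm
        _ = A * N := by rw [hMS]
    have h2 : A = S - τ • (1 : Matrix (Fin n) (Fin n) ℝ) := by rw [hSdef]; abel
    rw [h1, h2, Matrix.sub_mul, hSN, Matrix.smul_mul, Matrix.one_mul]
  have hMexpl : M = ((1 : Matrix (Fin n) (Fin n) ℝ) - B) - τ⁻¹ • R := by
    rw [hMN, hNdef, smul_add, smul_smul, smul_smul, hττ, one_smul,
      show τ * (τ⁻¹ * τ⁻¹) = τ⁻¹ by field_simp, sub_add_eq_sub_sub]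
  -- trace identities, spectral side
  have trM1 : M.trace = ∑ i, μ i / (τ + μ i) := by
    rw [hMdef]; exact prEq_conj_trace V hVsV _
  have trM2 : (M * M).trace = ∑ i, (μ i / (τ + μ i)) ^ 2 := by
    rw [hMdef, prEq_conj_mul V hVsV, prEq_conj_trace V hVsV]
    exact Finset.sum_congr rfl fun i _ => (sq _).symm
  -- trace identities, explicit side
  have trB : B.trace = ∑ i, b i := by rw [hBd, Matrix.trace_diagonal]
  have trK : ((1 : Matrix (Fin n) (Fin n) ℝ) - B).trace = ∑ i, τ⁻¹ * (d i * b i) := by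
    rw [hKd, Matrix.trace_diagonal]
  have trDB : (Dplus * B).trace = ∑ i, d i * b i := by
    rw [hD, hBd, Matrix.diagonal_mul_diagonal, Matrix.trace_diagonal]
  have trDBDB : ((Dplus * B) * (Dplus * B)).trace = ∑ i, (d i * b i) * (d i * b i) := by
    rw [hD, hBd]
    simp only [Matrix.diagonal_mul_diagonal]
    rw [Matrix.trace_diagonal]
  have trKK : (((1 : Matrix (Fin n) (Fin n) ℝ) - B) * ((1 : Matrix (Fin n) (Fin n) ℝ) - B)).trace
      = ∑ i, (τ⁻¹ * (d i * b i)) * (τ⁻¹ * (d i * b i)) := by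
    rw [hKd, Matrix.diagonal_mul_diagonal, Matrix.trace_diagonal]
  have trR : R.trace = (Qi * Q 1 2).trace := by
    rw [show R = (B * (E * Xt)) * (Qi * (Xtᵀ * (E * B))) by
      rw [hRdef]; simp only [Matrix.mul_assoc]]
    rw [Matrix.trace_mul_comm, hQ12]
    simp only [Matrix.mul_assoc, hEBBE]
  have trKR : (((1 : Matrix (Fin n) (Fin n) ℝ) - B) * R).trace = τ⁻¹ * (Qi * Q 2 3).trace := by
    rw [show ((1 : Matrix (Fin n) (Fin n) ℝ) - B) * R
        = (((1 : Matrix (Fin n) (Fin n) ℝ) - B) * (B * (E * Xt))) * (Qi * (Xtᵀ * (E * B))) by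
      rw [hRdef]; simp only [Matrix.mul_assoc]]
    rw [Matrix.trace_mul_comm]
    rw [show (Qi * (Xtᵀ * (E * B))) * (((1 : Matrix (Fin n) (Fin n) ℝ) - B) * (B * (E * Xt)))
        = Qi * (Xtᵀ * (E * (B * (((1 : Matrix (Fin n) (Fin n) ℝ) - B) * (B * (E * Xt)))))) by
      simp only [Matrix.mul_assoc]]
    rw [hEBKBE, Matrix.mul_smul, Matrix.mul_smul, Matrix.trace_smul, smul_eq_mul, ← hQ23]
  have trRR : (R * R).trace = ((Qi * Q 1 2) * (Qi * Q 1 2)).trace := by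
    rw [show R * R = (B * (E * Xt))
        * ((Qi * (Xtᵀ * (E * (B * (B * (E * Xt)))))) * (Qi * (Xtᵀ * (E * B)))) by
      rw [hRdef]; simp only [Matrix.mul_assoc]]
    rw [Matrix.trace_mul_comm, hQ12]
    simp only [Matrix.mul_assoc, hEBBE]
  -- expansion of M * M
  have hMM : M * M = (((1 : Matrix (Fin n) (Fin n) ℝ) - B) * ((1 : Matrix (Fin n) (Fin n) ℝ) - B))
      - τ⁻¹ • (((1 : Matrix (Fin n) (Fin n) ℝ) - B) * R)
      - τ⁻¹ • (R * ((1 : Matrix (Fin n) (Fin n) ℝ) - B))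
      + (τ⁻¹ * τ⁻¹) • (R * R) := by
    rw [hMexpl]
    simp only [Matrix.sub_mul, Matrix.mul_sub, Matrix.smul_mul, Matrix.mul_smul, smul_smul,
      smul_sub]
    abel
  -- scalar trace equations
  have teq1 : ∑ i, μ i / (τ + μ i) = τ⁻¹ * ((Dplus * B).trace - (Qi * Q 1 2).trace) := by
    rw [← trM1, hMexpl, Matrix.trace_sub, Matrix.trace_smul, trR, trK, smul_eq_mul, trDB,
      ← Finset.mul_sum]
    ring
  have teq2 : ∑ i, (μ i / (τ + μ i)) ^ 2
      = τ⁻¹ * τ⁻¹ * (((Dplus * B) * (Dplus * B)).trace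
        + ((Qi * Q 1 2) * (Qi * Q 1 2)).trace - 2 * (Qi * Q 2 3).trace) := by
    rw [← trM2, hMM, Matrix.trace_add, Matrix.trace_sub, Matrix.trace_sub, Matrix.trace_smul,
      Matrix.trace_smul, Matrix.trace_smul, Matrix.trace_mul_comm R, trKK, trKR, trRR, trDBDB]
    have hpull : ∑ i, (τ⁻¹ * (d i * b i)) * (τ⁻¹ * (d i * b i))
        = τ⁻¹ * τ⁻¹ * ∑ i, (d i * b i) * (d i * b i) := by
      rw [Finset.mul_sum]
      exact Finset.sum_congr rfl fun i _ => by ring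
    rw [hpull]
    simp only [smul_eq_mul]
    ring
  rw [teq1, teq2, show ((τ : ℝ) ^ 2)⁻¹ = τ⁻¹ * τ⁻¹ by rw [sq, mul_inv]]
  ring
end
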